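/- arXiv:1502.03891 — 10 statements merged into one kernel-verified Lean document; each statement's English description precedes it below -/
import Mathlib

section
/- For every integer l and every real s, the tau functions g and f satisfy the semi-discrete bilinear relation (D_s - 2b) g_{l+1}·g_l = -2b f_l², i.e. g_{l+1}'(s) g_l(s) - g_{l+1}(s) g_l'(s) - 2b g_{l+1}(s) g_l(s) = -2b f_l(s)², where ' denotes d/ds. (Lemma 2.1 of the paper.) -/
open Matrix

noncomputable def detCMM (n : ℕ) :
    ContinuousMultilinearMap ℝ (fun _ : Fin n => (Fin n → ℝ)) ℝ :=
  MultilinearMap.mkContinuous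
    (Matrix.detRowAlternating : (Fin n → ℝ) [⋀^Fin n]→ₗ[ℝ] ℝ).toMultilinearMap
    (Nat.factorial n) (by
      intro m
      have hdet : (Matrix.detRowAlternating (R := ℝ) (n := Fin n)).toMultilinearMap m
          = Matrix.det (Matrix.of m) := rfl
      rw [hdet, Matrix.det_apply]
      calc ‖∑ σ : Equiv.Perm (Fin n), Equiv.Perm.sign σ • ∏ i, Matrix.of m (σ i) i‖
          ≤ ∑ σ : Equiv.Perm (Fin n), ‖Equiv.Perm.sign σ • ∏ i, Matrix.of m (σ i) i‖ :=
            norm_sum_le _ _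
        _ ≤ ∑ _σ : Equiv.Perm (Fin n), ∏ i, ‖m i‖ := by
            refine Finset.sum_le_sum fun σ _ => ?_
            have h1 : ‖Equiv.Perm.sign σ • ∏ i, Matrix.of m (σ i) i‖
                = ‖∏ i, m (σ i) i‖ := by
              rcases Int.units_eq_one_or (Equiv.Perm.sign σ) with h | h <;>
                simp [h, norm_neg]
            rw [h1]
            calc ‖∏ i, m (σ i) i‖ = ∏ i, ‖m (σ i) i‖ := by
                  simp [Real.norm_eq_abs, Finset.abs_prod]
              _ ≤ ∏ i, ‖m (σ i)‖ := by
                  refine Finset.prod_le_prod (fun i _ => norm_nonneg _) fun i _ => ?_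
                  exact norm_le_pi_norm (m (σ i)) i
              _ = ∏ i, ‖m i‖ := Equiv.prod_comp σ fun i => ‖m i‖
        _ = (Nat.factorial n : ℝ) * ∏ i, ‖m i‖ := by
            rw [Finset.sum_const, Finset.card_univ, Fintype.card_perm, Fintype.card_fin,
              nsmul_eq_mul])

lemma detCMM_apply {n : ℕ} (m : Fin n → Fin n → ℝ) :
    detCMM n m = Matrix.det (Matrix.of m) := rfl

lemma hasDerivAt_det {n : ℕ} {M : ℝ → Matrix (Fin n) (Fin n) ℝ}
    {M' : Matrix (Fin n) (Fin n) ℝ} {s : ℝ}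
    (h : ∀ i j, HasDerivAt (fun t => M t i j) (M' i j) s) :
    HasDerivAt (fun t => (M t).det) (∑ i, ((M s).updateRow i (M' i)).det) s := by
  have hrows : HasDerivAt (fun t => (fun i => M t i)) (fun i => M' i) s :=
    hasDerivAt_pi.2 fun i => hasDerivAt_pi.2 fun j => h i j
  have H := ((detCMM n).hasFDerivAt (x := fun i => M s i)).comp_hasDerivAt s hrows
  have heq : (fun t => (M t).det) = fun t => detCMM n (fun i => M t i) := rfl
  rw [heq]
  refine H.congr_deriv ?_
  rw [ContinuousMultilinearMap.linearDeriv_apply]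
  refine Finset.sum_congr rfl fun i _ => ?_
  rfl

open Matrix

variable {n : ℕ}

lemma myVecMulVec_mulVec (u v z : Fin n → ℝ) :
    Matrix.vecMulVec u v *ᵥ z = (v ⬝ᵥ z) • u := by
  funext i
  simp only [Matrix.mulVec, Matrix.vecMulVec_apply, dotProduct, Pi.smul_apply,
    smul_eq_mul, Finset.sum_mul, Finset.mul_sum]
  exact Finset.sum_congr rfl fun j _ => by ring

lemma mySmul_vecMulVec (c : ℝ) (u v : Fin n → ℝ) :
    c • Matrix.vecMulVec u v = Matrix.vecMulVec u (c • v) := by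
  funext i j
  simp [Matrix.vecMulVec_apply]
  ring

lemma myDet_add_vecMulVec (A : Matrix (Fin n) (Fin n) ℝ) (hA : IsUnit A.det)
    (u v : Fin n → ℝ) :
    (A + Matrix.vecMulVec u v).det = A.det * (1 + v ⬝ᵥ A⁻¹ *ᵥ u) := by
  rw [Matrix.vecMulVec_eq Unit u v, Matrix.det_add_replicateCol_mul_replicateRow hA u v]
  congr 1
  rw [Matrix.det_unique]
  simp only [Matrix.add_apply, Matrix.one_apply_eq]
  congr 1
  simp only [Matrix.mul_apply, Matrix.replicateRow_apply, Matrix.replicateCol_apply, dotProduct,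
    Matrix.mulVec, Finset.univ_unique, Finset.sum_singleton, Finset.sum_mul, Finset.mul_sum]
  rw [Finset.sum_comm]
  exact Finset.sum_congr rfl fun i _ => Finset.sum_congr rfl fun j _ => by ring

lemma mySum_updateRow (A : Matrix (Fin n) (Fin n) ℝ) (hA : IsUnit A.det)
    (hsym : Aᵀ = A) (y z : Fin n → ℝ) :
    ∑ i, (y i) * ((A.updateRow i z).det) = A.det * (y ⬝ᵥ A⁻¹ *ᵥ z) := by
  have hadj : A.adjugate *ᵥ z = A.det • (A⁻¹ *ᵥ z) := by
    rw [Matrix.inv_def, Ring.inverse_eq_inv']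
    rw [Matrix.smul_mulVec, smul_smul, mul_inv_cancel₀ hA.ne_zero, one_smul]
  have h1 : ∀ i, (A.updateRow i z).det = (A.adjugate *ᵥ z) i := by
    intro i
    rw [← Matrix.cramer_transpose_apply, hsym, Matrix.cramer_eq_adjugate_mulVec]
  simp_rw [h1, hadj]
  simp only [dotProduct, Pi.smul_apply, smul_eq_mul, Finset.mul_sum]
  exact Finset.sum_congr rfl fun j _ => by ring

open Matrix

variable {n : ℕ}

lemma myDot_symm (A : Matrix (Fin n) (Fin n) ℝ) (hsym : Aᵀ = A) (y w : Fin n → ℝ) :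
    y ⬝ᵥ A *ᵥ w = w ⬝ᵥ A *ᵥ y := by
  rw [Matrix.dotProduct_mulVec, ← Matrix.mulVec_transpose, hsym, dotProduct_comm]

lemma mySM (A : Matrix (Fin n) (Fin n) ℝ) (hA : IsUnit A.det) (hsym : Aᵀ = A)
    (c : ℝ) (w y : Fin n → ℝ)
    (hB : IsUnit (A + c • Matrix.vecMulVec w w).det)
    (hc : 1 + c * (w ⬝ᵥ A⁻¹ *ᵥ w) ≠ 0) :
    y ⬝ᵥ (A + c • Matrix.vecMulVec w w)⁻¹ *ᵥ y
      = y ⬝ᵥ A⁻¹ *ᵥ y - c * (w ⬝ᵥ A⁻¹ *ᵥ y)^2 / (1 + c * (w ⬝ᵥ A⁻¹ *ᵥ w)) := by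
  set B := A + c • Matrix.vecMulVec w w with hBdef
  set γ := w ⬝ᵥ A⁻¹ *ᵥ w with hγ
  set β := w ⬝ᵥ A⁻¹ *ᵥ y with hβ
  obtain ⟨t, ht⟩ : ∃ t, t * (1 + c * γ) = c * β := ⟨c * β / (1 + c * γ), by field_simp⟩
  have hsyminv : (A⁻¹)ᵀ = A⁻¹ := by rw [Matrix.transpose_nonsing_inv, hsym]
  have hAinv : ∀ z : Fin n → ℝ, A *ᵥ (A⁻¹ *ᵥ z) = z := by
    intro z
    rw [Matrix.mulVec_mulVec, Matrix.mul_nonsing_inv A hA, Matrix.one_mulVec]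
  have key : B *ᵥ (A⁻¹ *ᵥ y - t • (A⁻¹ *ᵥ w)) = y := by
    rw [hBdef, Matrix.add_mulVec, Matrix.smul_mulVec, myVecMulVec_mulVec]
    rw [Matrix.mulVec_sub, Matrix.mulVec_smul, hAinv, hAinv]
    rw [dotProduct_sub, dotProduct_smul]
    funext i
    simp only [Pi.add_apply, Pi.sub_apply, Pi.smul_apply, smul_eq_mul, ← hβ, ← hγ]
    linear_combination (-(w i)) * ht
  have hBinv : B⁻¹ *ᵥ y = A⁻¹ *ᵥ y - t • (A⁻¹ *ᵥ w) := by
    conv_lhs => rw [← key]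
    rw [Matrix.mulVec_mulVec, Matrix.nonsing_inv_mul B hB, Matrix.one_mulVec]
  rw [hBinv, dotProduct_sub, dotProduct_smul]
  have h2 : y ⬝ᵥ A⁻¹ *ᵥ w = β := by
    rw [hβ]; exact myDot_symm A⁻¹ hsyminv y w
  rw [h2, smul_eq_mul]
  field_simp
  linear_combination (-β) * ht

open Matrix Polynomial

variable {n : ℕ}

lemma myEval_det (A : Matrix (Fin n) (Fin n) ℝ) (ε : ℝ) :
    ((-A).charpoly).eval ε = (A + ε • (1 : Matrix (Fin n) (Fin n) ℝ)).det := by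
  rw [Matrix.charpoly]
  rw [show eval ε (-A).charmatrix.det = ((-A).charmatrix.map (Polynomial.evalRingHom ε)).det
    from RingHom.map_det (Polynomial.evalRingHom ε) _]
  congr 1
  ext i j
  by_cases h : i = j <;>
    simp [Matrix.charmatrix_apply, Matrix.map_apply, Matrix.diagonal_apply, h,
      Matrix.one_apply, add_comm]

lemma myFinite_bad (A : Matrix (Fin n) (Fin n) ℝ) :
    {ε : ℝ | (A + ε • (1 : Matrix (Fin n) (Fin n) ℝ)).det = 0}.Finite := by
  have h : {ε : ℝ | (A + ε • (1 : Matrix (Fin n) (Fin n) ℝ)).det = 0}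
      ⊆ {x | ((-A).charpoly).IsRoot x} := by
    intro ε hε
    simp only [Set.mem_setOf_eq, Polynomial.IsRoot, myEval_det]
    exact hε
  exact (Polynomial.finite_setOf_isRoot (Matrix.charpoly_monic (-A)).ne_zero).subset h

lemma myCont_det {m : ℝ → Matrix (Fin n) (Fin n) ℝ}
    (h : ∀ i j, Continuous fun ε => m ε i j) : Continuous fun ε => (m ε).det :=
  (continuous_matrix h).matrix_det

lemma myDense {s : Set ℝ} (hs : s.Finite) : Dense sᶜ :=
  hs.countable.dense_compl ℝ

set_option maxHeartbeats 1000000 in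
/-- Lemma 2.1: the semi-discrete bilinear relation `(D_s - 2b) g_{l+1}·g_l = -2b f_l²`. -/
theorem stmt0
    (N : ℕ) (hN : 1 ≤ N) (b : ℝ) (hb : b ≠ 0)
    (p : Fin (2*N) → ℝ) (hp0 : ∀ i, p i ≠ 0)
    (hpsum : ∀ i j, p i + p j ≠ 0)
    (hbm : ∀ i, 1 - b * p i ≠ 0) (hbp : ∀ i, 1 + b * p i ≠ 0)
    (ξ : Fin (2*N) → ℝ)
    (C : Matrix (Fin (2*N)) (Fin (2*N)) ℝ) (hC : ∀ i j, C i j = C j i)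
    (φ : Fin (2*N) → ℤ → ℤ → ℝ → ℝ)
    (hφ : ∀ i n l s, φ i n l s =
      p i ^ n * ((1 + b * p i) / (1 - b * p i)) ^ l * Real.exp (s / p i + ξ i))
    (g f : ℤ → ℝ → ℝ)
    (hg : ∀ l s, g l s =
      Matrix.det (Matrix.of fun i j => C i j + φ i 0 l s * φ j 0 l s / (p i + p j)))
    (hf : ∀ l s, f l s =
      Matrix.det (Matrix.of fun i j =>
        C i j - (p j / p i) * ((1 + b * p i) / (1 - b * p j)) *
          (φ i 0 l s * φ j 0 l s) / (p i + p j)))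
    (l : ℤ) (s : ℝ) :
    deriv (g (l+1)) s * g l s - g (l+1) s * deriv (g l) s
      - 2*b * (g (l+1) s * g l s) = -2*b * (f l s)^2 := by
  set Mt : ℤ → ℝ → ℝ → Matrix (Fin (2*N)) (Fin (2*N)) ℝ := fun l' ε t =>
    Matrix.of (fun i j => C i j + φ i 0 l' t * φ j 0 l' t / (p i + p j)) + ε • 1 with hMt
  set Ft : ℝ → ℝ → Matrix (Fin (2*N)) (Fin (2*N)) ℝ := fun ε t =>
    Matrix.of (fun i j => C i j - (p j / p i) * ((1 + b * p i) / (1 - b * p j)) *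
      (φ i 0 l t * φ j 0 l t) / (p i + p j)) + ε • 1 with hFt
  set w0 : Fin (2*N) → ℝ := fun i => φ i 0 l s / (1 - b * p i) with hw0
  set vm : Fin (2*N) → ℝ := fun i => φ i 0 l s / p i with hvmd
  set vp : Fin (2*N) → ℝ := fun i => φ i 0 (l+1) s / p i with hvpd
  have hrne : ∀ i, (1 + b * p i) / (1 - b * p i) ≠ 0 := fun i => div_ne_zero (hbp i) (hbm i)
  have hφl1 : ∀ i t, φ i 0 (l+1) t = ((1 + b * p i) / (1 - b * p i)) * φ i 0 l t := by
    intro i t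
    rw [hφ, hφ, zpow_add₀ (hrne i), zpow_one]
    ring
  -- derivative of φ
  have hdφ : ∀ (i) (l' : ℤ), HasDerivAt (fun t => φ i 0 l' t) (φ i 0 l' s / p i) s := by
    intro i l'
    have hfun : (fun t => φ i 0 l' t)
        = fun t => (p i ^ (0:ℤ) * ((1 + b * p i) / (1 - b * p i)) ^ l')
            * Real.exp (t / p i + ξ i) := by
      funext t; rw [hφ]
    rw [hfun]
    have h1 : HasDerivAt (fun t : ℝ => t / p i + ξ i) (1 / p i) s := by
      simpa using ((hasDerivAt_id s).div_const (p i)).add_const (ξ i)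
    have h2 := (h1.exp).const_mul
      (p i ^ (0:ℤ) * ((1 + b * p i) / (1 - b * p i)) ^ l')
    have hval : (p i ^ (0:ℤ) * ((1 + b * p i) / (1 - b * p i)) ^ l')
        * (Real.exp (s / p i + ξ i) * (1 / p i)) = φ i 0 l' s / p i := by
      rw [hφ]; ring
    rw [← hval]
    exact h2
  -- derivative of matrix entries
  have hder : ∀ (l' : ℤ) (ε : ℝ) (i j), HasDerivAt (fun t => Mt l' ε t i j)
      ((φ i 0 l' s / p i) * (φ j 0 l' s / p j)) s := by
    intro l' ε i j
    simp only [hMt, Matrix.add_apply, Matrix.of_apply]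
    have h1 := ((((hdφ i l').mul (hdφ j l')).div_const (p i + p j)).const_add
      (C i j)).add_const ((ε • (1 : Matrix (Fin (2*N)) (Fin (2*N)) ℝ)) i j)
    have hval : ((φ i 0 l' s / p i) * φ j 0 l' s + φ i 0 l' s * (φ j 0 l' s / p j))
        / (p i + p j) = (φ i 0 l' s / p i) * (φ j 0 l' s / p j) := by
      field_simp [hp0 i, hp0 j, hpsum i j]
      ring
    rw [← hval]
    exact h1
  -- derivative of determinants
  have hgD : ∀ (l' : ℤ) (ε : ℝ), HasDerivAt (fun t => (Mt l' ε t).det)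
      (∑ i, ((Mt l' ε s).updateRow i
        (fun j => φ i 0 l' s / p i * (φ j 0 l' s / p j))).det) s := by
    intro l' ε
    exact hasDerivAt_det (M := fun t => Mt l' ε t)
      (M' := Matrix.of fun i j => φ i 0 l' s / p i * (φ j 0 l' s / p j))
      (fun i j => hder l' ε i j)
  -- symmetry
  have hsymM : ∀ (l' : ℤ) (ε : ℝ), (Mt l' ε s)ᵀ = Mt l' ε s := by
    intro l' ε
    ext i j
    simp only [hMt, Matrix.transpose_apply, Matrix.add_apply, Matrix.of_apply,
      Matrix.smul_apply, Matrix.one_apply, smul_eq_mul]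
    rw [hC j i, mul_comm (φ j 0 l' s) (φ i 0 l' s), add_comm (p j) (p i)]
    congr 1
    simp [eq_comm]
  -- relation to base matrix
  have hMε : ∀ (l' : ℤ) (ε : ℝ), Mt l' ε s = Mt l' 0 s + ε • 1 := by
    intro l' ε
    simp only [hMt]
    rw [zero_smul, add_zero]
  -- continuity facts
  have hcontM : ∀ (l' : ℤ), Continuous fun ε => (Mt l' ε s).det := by
    intro l'
    apply myCont_det
    intro i j
    simp only [hMt, Matrix.add_apply, Matrix.of_apply, Matrix.smul_apply, smul_eq_mul]
    fun_prop
  have hcontU : ∀ (l' : ℤ) (r : Fin (2*N) → Fin (2*N) → ℝ),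
      Continuous fun ε => ∑ i, ((Mt l' ε s).updateRow i (r i)).det := by
    intro l' r
    apply continuous_finset_sum
    intro i _
    apply myCont_det
    intro i' j
    rcases eq_or_ne i' i with h | h
    · simp only [Matrix.updateRow_apply, h, if_pos rfl]
      exact continuous_const
    · simp only [Matrix.updateRow_apply, if_neg h, hMt, Matrix.add_apply, Matrix.of_apply,
        Matrix.smul_apply, smul_eq_mul]
      fun_prop
  have hcontF : Continuous fun ε => (Ft ε s).det := by
    apply myCont_det
    intro i j
    simp only [hFt, Matrix.add_apply, Matrix.of_apply, Matrix.smul_apply, smul_eq_mul]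
    fun_prop
  -- the bilinear combination as a function of the regularization parameter
  set P : ℝ → ℝ := fun ε =>
    (∑ i, ((Mt (l+1) ε s).updateRow i
        (fun j => φ i 0 (l+1) s / p i * (φ j 0 (l+1) s / p j))).det) * (Mt l ε s).det
    - (Mt (l+1) ε s).det *
      (∑ i, ((Mt l ε s).updateRow i
        (fun j => φ i 0 l s / p i * (φ j 0 l s / p j))).det)
    - 2*b*((Mt (l+1) ε s).det * (Mt l ε s).det) + 2*b*((Ft ε s).det)^2 with hP
  have hcontP : Continuous P := by
    rw [hP]
    exact ((((hcontU (l+1) _).mul (hcontM l)).sub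
      ((hcontM (l+1)).mul (hcontU l _))).sub
      (continuous_const.mul ((hcontM (l+1)).mul (hcontM l)))).add
      (continuous_const.mul (hcontF.pow 2))
  -- core identity on the set of good ε
  have hP0 : ∀ ε : ℝ, (Mt l ε s).det ≠ 0 → (Mt (l+1) ε s).det ≠ 0 → P ε = 0 := by
    intro ε hD hDB
    have hAu : IsUnit (Mt l ε s).det := isUnit_iff_ne_zero.mpr hD
    have hBu : IsUnit (Mt (l+1) ε s).det := isUnit_iff_ne_zero.mpr hDB
    have hAsym := hsymM l ε
    have hBsym := hsymM (l+1) ε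
    have hiAsym : ((Mt l ε s)⁻¹)ᵀ = (Mt l ε s)⁻¹ := by
      rw [Matrix.transpose_nonsing_inv, hAsym]
    -- rank-one relations
    have hBA : Mt (l+1) ε s = Mt l ε s + (2*b) • Matrix.vecMulVec w0 w0 := by
      ext i j
      have key : φ i 0 (l+1) s * φ j 0 (l+1) s / (p i + p j)
          = φ i 0 l s * φ j 0 l s / (p i + p j) + (2*b) * (w0 i * w0 j) := by
        rw [hφl1 i s, hφl1 j s, hw0]
        field_simp [hbm i, hbm j, hpsum i j]
        ring
      simp only [hMt, Matrix.add_apply, Matrix.of_apply, Matrix.smul_apply,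
        Matrix.vecMulVec_apply, smul_eq_mul]
      linear_combination key
    have hFA : Ft ε s = Mt l ε s - Matrix.vecMulVec vm w0 := by
      ext i j
      have key : C i j - (p j / p i) * ((1 + b * p i) / (1 - b * p j)) *
          (φ i 0 l s * φ j 0 l s) / (p i + p j)
          = C i j + φ i 0 l s * φ j 0 l s / (p i + p j) - vm i * w0 j := by
        rw [hvmd, hw0]
        have := hp0 i; have := hbm j; have := hpsum i j
        have : 1 - p j * b ≠ 0 := by rw [mul_comm]; exact hbm j
        field_simp
        ring
      simp only [hFt, hMt, Matrix.sub_apply, Matrix.add_apply, Matrix.of_apply,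
        Matrix.smul_apply, Matrix.vecMulVec_apply, smul_eq_mul]
      linear_combination key
    -- determinant evaluations
    have E1 : (Mt (l+1) ε s).det
        = (Mt l ε s).det * (1 + 2*b*(w0 ⬝ᵥ (Mt l ε s)⁻¹ *ᵥ w0)) := by
      rw [hBA, mySmul_vecMulVec, myDet_add_vecMulVec _ hAu w0 ((2*b) • w0),
        smul_dotProduct, smul_eq_mul]
    have E4 : 1 + 2*b*(w0 ⬝ᵥ (Mt l ε s)⁻¹ *ᵥ w0) ≠ 0 := by
      intro h
      apply hDB
      rw [E1, h, mul_zero]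
    have E2 : (Ft ε s).det = (Mt l ε s).det * (1 - w0 ⬝ᵥ (Mt l ε s)⁻¹ *ᵥ vm) := by
      have hFA' : Ft ε s = Mt l ε s + Matrix.vecMulVec vm (-w0) := by
        rw [hFA]
        ext i j
        simp only [Matrix.sub_apply, Matrix.add_apply, Matrix.vecMulVec_apply, Pi.neg_apply]
        ring
      rw [hFA', myDet_add_vecMulVec _ hAu vm (-w0), neg_dotProduct]
      ring
    have E3 : (∑ i, ((Mt l ε s).updateRow i
          (fun j => φ i 0 l s / p i * (φ j 0 l s / p j))).det)
        = (Mt l ε s).det * (vm ⬝ᵥ (Mt l ε s)⁻¹ *ᵥ vm) := by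
      have hrow : ∀ i : Fin (2*N),
          (fun j => φ i 0 l s / p i * (φ j 0 l s / p j)) = vm i • vm := by
        intro i; funext j
        simp [hvmd, Pi.smul_apply, smul_eq_mul]
      calc (∑ i, ((Mt l ε s).updateRow i
              (fun j => φ i 0 l s / p i * (φ j 0 l s / p j))).det)
          = ∑ i, vm i * ((Mt l ε s).updateRow i vm).det := by
            refine Finset.sum_congr rfl fun i _ => ?_
            rw [hrow i, Matrix.det_updateRow_smul]
        _ = (Mt l ε s).det * (vm ⬝ᵥ (Mt l ε s)⁻¹ *ᵥ vm) :=
            mySum_updateRow _ hAu hAsym vm vm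
    have E5 : (∑ i, ((Mt (l+1) ε s).updateRow i
          (fun j => φ i 0 (l+1) s / p i * (φ j 0 (l+1) s / p j))).det)
        = (Mt (l+1) ε s).det * (vp ⬝ᵥ (Mt (l+1) ε s)⁻¹ *ᵥ vp) := by
      have hrow : ∀ i : Fin (2*N),
          (fun j => φ i 0 (l+1) s / p i * (φ j 0 (l+1) s / p j)) = vp i • vp := by
        intro i; funext j
        simp [hvpd, Pi.smul_apply, smul_eq_mul]
      calc (∑ i, ((Mt (l+1) ε s).updateRow i
              (fun j => φ i 0 (l+1) s / p i * (φ j 0 (l+1) s / p j))).det)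
          = ∑ i, vp i * ((Mt (l+1) ε s).updateRow i vp).det := by
            refine Finset.sum_congr rfl fun i _ => ?_
            rw [hrow i, Matrix.det_updateRow_smul]
        _ = (Mt (l+1) ε s).det * (vp ⬝ᵥ (Mt (l+1) ε s)⁻¹ *ᵥ vp) :=
            mySum_updateRow _ hBu hBsym vp vp
    -- Sherman-Morrison
    have hBu' : IsUnit (Mt l ε s + (2*b) • Matrix.vecMulVec w0 w0).det := hBA ▸ hBu
    have E6 : vp ⬝ᵥ (Mt (l+1) ε s)⁻¹ *ᵥ vp
        = vp ⬝ᵥ (Mt l ε s)⁻¹ *ᵥ vp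
          - (2*b) * (w0 ⬝ᵥ (Mt l ε s)⁻¹ *ᵥ vp)^2
            / (1 + (2*b) * (w0 ⬝ᵥ (Mt l ε s)⁻¹ *ᵥ w0)) := by
      rw [hBA]
      exact mySM _ hAu hAsym (2*b) w0 vp hBu' E4
    -- expansions
    have hvpe : vp = vm + (2*b) • w0 := by
      funext i
      simp only [hvpd, hvmd, hw0, Pi.add_apply, Pi.smul_apply, smul_eq_mul]
      rw [hφl1 i s]
      field_simp [hp0 i, hbm i]
      ring
    have e8 : w0 ⬝ᵥ (Mt l ε s)⁻¹ *ᵥ vp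
        = w0 ⬝ᵥ (Mt l ε s)⁻¹ *ᵥ vm + 2*b*(w0 ⬝ᵥ (Mt l ε s)⁻¹ *ᵥ w0) := by
      rw [hvpe]
      simp only [Matrix.mulVec_add, Matrix.mulVec_smul, dotProduct_add,
        dotProduct_smul, smul_eq_mul]
    have e9 : vp ⬝ᵥ (Mt l ε s)⁻¹ *ᵥ vp
        = vm ⬝ᵥ (Mt l ε s)⁻¹ *ᵥ vm + 4*b*(w0 ⬝ᵥ (Mt l ε s)⁻¹ *ᵥ vm)
          + 4*b^2*(w0 ⬝ᵥ (Mt l ε s)⁻¹ *ᵥ w0) := by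
      rw [hvpe]
      simp only [Matrix.mulVec_add, Matrix.mulVec_smul, dotProduct_add,
        dotProduct_smul, add_dotProduct, smul_dotProduct, smul_eq_mul]
      rw [myDot_symm _ hiAsym vm w0]
      ring
    -- final computation
    rw [hP]
    simp only []
    rw [E5, E6, e8, e9, E3, E2, E1]
    set DD := (Mt l ε s).det with hDD
    set GG := w0 ⬝ᵥ (Mt l ε s)⁻¹ *ᵥ w0 with hGG
    set BB := w0 ⬝ᵥ (Mt l ε s)⁻¹ *ᵥ vm with hBB
    set AA := vm ⬝ᵥ (Mt l ε s)⁻¹ *ᵥ vm with hAA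
    field_simp [E4]
    ring
  -- density argument
  have hfin : ({ε : ℝ | (Mt l ε s).det = 0} ∪ {ε : ℝ | (Mt (l+1) ε s).det = 0}).Finite := by
    apply Set.Finite.union
    · refine (myFinite_bad (Mt l 0 s)).subset ?_
      intro ε hε
      simp only [Set.mem_setOf_eq] at hε ⊢
      rw [← hMε l ε]
      exact hε
    · refine (myFinite_bad (Mt (l+1) 0 s)).subset ?_
      intro ε hε
      simp only [Set.mem_setOf_eq] at hε ⊢
      rw [← hMε (l+1) ε]
      exact hε
  have hdense : Dense ({ε : ℝ | (Mt l ε s).det = 0} ∪ {ε : ℝ | (Mt (l+1) ε s).det = 0})ᶜ :=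
    myDense hfin
  have hPzero : P = fun _ => 0 := by
    apply Continuous.ext_on hdense hcontP continuous_const
    intro ε hε
    simp only [Set.mem_compl_iff, Set.mem_union, Set.mem_setOf_eq, not_or] at hε
    exact hP0 ε hε.1 hε.2
  have hP00 : P 0 = 0 := by rw [hPzero]
  rw [hP] at hP00
  simp only [] at hP00
  -- rewrite the goal in matrix terms
  have hgv : ∀ l' : ℤ, g l' s = (Mt l' 0 s).det := by
    intro l'
    rw [hg]
    congr 1
    simp only [hMt]
    rw [zero_smul, add_zero]
  have hgfun : ∀ l' : ℤ, g l' = fun t => (Mt l' 0 t).det := by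
    intro l'
    funext t
    rw [hg]
    congr 1
    simp only [hMt]
    rw [zero_smul, add_zero]
  have hfv : f l s = (Ft 0 s).det := by
    rw [hf]
    congr 1
    simp only [hFt]
    rw [zero_smul, add_zero]
  have hd1 : deriv (g (l+1)) s = ∑ i, ((Mt (l+1) 0 s).updateRow i
      (fun j => φ i 0 (l+1) s / p i * (φ j 0 (l+1) s / p j))).det := by
    rw [hgfun (l+1)]
    exact (hgD (l+1) 0).deriv
  have hd0 : deriv (g l) s = ∑ i, ((Mt l 0 s).updateRow i
      (fun j => φ i 0 l s / p i * (φ j 0 l s / p j))).det := by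
    rw [hgfun l]
    exact (hgD l 0).deriv
  rw [hd1, hd0, hgv (l+1), hgv l, hfv]
  linarith [hP00]
end

section
/- For every integer l and real s, f_l(s) equals the determinant of the (2N+1)×(2N+1) matrix whose upper-left 2N×2N block is (m_{ij}(l,s)), whose (i, 2N+1) entries are φ_i^{(-1)}(l,s) for i = 1,…,2N, whose (2N+1, j) entries are φ_j^{(0)}(l,s)/(1 - b p_j) for j = 1,…,2N, and whose (2N+1, 2N+1) entry is 1; it also equals the determinant of the analogous bordered matrix with (i, 2N+1) entries φ_i^{(0)}(l,s)/(1 - b p_i), (2N+1, j) entries φ_j^{(-1)}(l,s), and corner entry 1. -/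
/-- The two bordered-determinant representations of `f_l`. -/
theorem stmt1
    (N : ℕ) (hN : 1 ≤ N) (b : ℝ) (hb : b ≠ 0)
    (p : Fin (2*N) → ℝ) (hp0 : ∀ i, p i ≠ 0)
    (hpsum : ∀ i j, p i + p j ≠ 0)
    (hbm : ∀ i, 1 - b * p i ≠ 0) (hbp : ∀ i, 1 + b * p i ≠ 0)
    (ξ : Fin (2*N) → ℝ)
    (C : Matrix (Fin (2*N)) (Fin (2*N)) ℝ) (hC : ∀ i j, C i j = C j i)
    (φ : Fin (2*N) → ℤ → ℤ → ℝ → ℝ)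
    (hφ : ∀ i n l s, φ i n l s =
      p i ^ n * ((1 + b * p i) / (1 - b * p i)) ^ l * Real.exp (s / p i + ξ i))
    (f : ℤ → ℝ → ℝ)
    (hf : ∀ l s, f l s =
      Matrix.det (Matrix.of fun i j =>
        C i j - (p j / p i) * ((1 + b * p i) / (1 - b * p j)) *
          (φ i 0 l s * φ j 0 l s) / (p i + p j)))
    (l : ℤ) (s : ℝ) :
    f l s = Matrix.det (Matrix.fromBlocks
        (Matrix.of fun i j => C i j + φ i 0 l s * φ j 0 l s / (p i + p j))
        (Matrix.of fun i (_ : Unit) => φ i (-1) l s)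
        (Matrix.of fun (_ : Unit) j => φ j 0 l s / (1 - b * p j))
        (Matrix.of fun (_ : Unit) (_ : Unit) => (1 : ℝ)))
    ∧ f l s = Matrix.det (Matrix.fromBlocks
        (Matrix.of fun i j => C i j + φ i 0 l s * φ j 0 l s / (p i + p j))
        (Matrix.of fun i (_ : Unit) => φ i 0 l s / (1 - b * p i))
        (Matrix.of fun (_ : Unit) j => φ j (-1) l s)
        (Matrix.of fun (_ : Unit) (_ : Unit) => (1 : ℝ))) := by
  have hφm1 : ∀ i, φ i (-1) l s = φ i 0 l s / p i := by
    intro i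
    rw [hφ, hφ, zpow_neg_one, zpow_zero]
    ring
  have hD : (Matrix.of fun (_ : Unit) (_ : Unit) => (1 : ℝ)) = (1 : Matrix Unit Unit ℝ) := by
    ext i j
    simp [Matrix.one_apply, Subsingleton.elim i j]
  constructor
  · rw [hf, hD, Matrix.det_fromBlocks_one₂₂]
    congr 1
    ext i j
    simp only [Matrix.sub_apply, Matrix.of_apply, Matrix.mul_apply, Fintype.sum_unique,
      hφm1]
    have h1 := hp0 i
    have h2 := hpsum i j
    have h3 := hbm j
    have h3' : 1 - p j * b ≠ 0 := by rw [mul_comm]; exact h3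
    field_simp
    ring
  · rw [hf, hD, Matrix.det_fromBlocks_one₂₂]
    have hT : (Matrix.of fun i j =>
        C i j - (p j / p i) * ((1 + b * p i) / (1 - b * p j)) *
          (φ i 0 l s * φ j 0 l s) / (p i + p j)) =
        Matrix.transpose (Matrix.of fun i j =>
        C j i - (p i / p j) * ((1 + b * p j) / (1 - b * p i)) *
          (φ j 0 l s * φ i 0 l s) / (p j + p i)) := by
      ext i j
      simp [Matrix.transpose_apply]
    rw [hT, Matrix.det_transpose]
    congr 1
    ext i j
    simp only [Matrix.sub_apply, Matrix.of_apply, Matrix.mul_apply, Fintype.sum_unique,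
      hφm1]
    rw [hC i j]
    have h1 := hp0 j
    have h2 := hpsum j i
    have h2' := hpsum i j
    have h3 := hbm i
    have h3' : 1 - p i * b ≠ 0 := by rw [mul_comm]; exact h3
    field_simp
    ring
end

section
/- For every integer l and real s, (d/ds - 2b) g_{l+1}(s) equals the determinant of the (2N+2)×(2N+2) matrix whose upper-left 2N×2N block is (m_{ij}(l,s)), whose column 2N+1 has entries φ_i^{(-1)}(l,s) (i = 1,…,2N), whose column 2N+2 has entries 2b φ_i^{(0)}(l,s)/(1 - b p_i) (i = 1,…,2N), whose row 2N+1 has entries -φ_j^{(-1)}(l,s) (j = 1,…,2N) followed by the entries 0 and -2b in columns 2N+1 and 2N+2, and whose row 2N+2 has entries -φ_j^{(0)}(l,s)/(1 - b p_j) (j = 1,…,2N) followed by the entries -1 and 1 in columns 2N+1 and 2N+2. -/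
set_option maxHeartbeats 1000000

open Finset Matrix

private lemma hasDerivAt_det_aux {n : ℕ} (M : ℝ → Matrix (Fin n) (Fin n) ℝ)
    (M' : Matrix (Fin n) (Fin n) ℝ) (x : ℝ)
    (h : ∀ i j, HasDerivAt (fun t => M t i j) (M' i j) x) :
    HasDerivAt (fun t => (M t).det)
      (∑ i, ((M x).updateCol i fun r => M' r i).det) x := by
  have hdet : (fun t => (M t).det)
      = fun t => ∑ σ : Equiv.Perm (Fin n), ((Equiv.Perm.sign σ : ℤ) : ℝ) * ∏ i, M t (σ i) i := by
    funext t; exact Matrix.det_apply' (M t)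
  rw [hdet]
  have H : HasDerivAt
      (fun t => ∑ σ : Equiv.Perm (Fin n), ((Equiv.Perm.sign σ : ℤ) : ℝ) * ∏ i, M t (σ i) i)
      (∑ σ : Equiv.Perm (Fin n), ((Equiv.Perm.sign σ : ℤ) : ℝ) *
        ∑ i, (∏ j ∈ univ.erase i, M x (σ j) j) • M' (σ i) i) x := by
    refine HasDerivAt.fun_sum fun σ _ => ?_
    exact (HasDerivAt.fun_finsetProd fun i _ => h (σ i) i).const_mul _
  convert H using 1
  have hupd : ∀ i, ((M x).updateCol i fun r => M' r i).det
      = ∑ σ : Equiv.Perm (Fin n), ((Equiv.Perm.sign σ : ℤ) : ℝ) *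
          (M' (σ i) i * ∏ j ∈ univ.erase i, M x (σ j) j) := by
    intro i
    rw [Matrix.det_apply']
    refine Finset.sum_congr rfl fun σ _ => ?_
    congr 1
    rw [← Finset.mul_prod_erase _ _ (Finset.mem_univ i)]
    congr 1
    · simp [Matrix.updateCol_apply]
    · exact Finset.prod_congr rfl fun j hj => by
        rw [Matrix.updateCol_apply, if_neg (Finset.ne_of_mem_erase hj)]
  simp only [hupd]
  rw [Finset.sum_comm]
  refine Finset.sum_congr rfl fun σ _ => ?_
  rw [Finset.mul_sum]
  refine Finset.sum_congr rfl fun i _ => ?_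
  rw [smul_eq_mul]; ring

private lemma det_add_rank_one {n : ℕ} (M : Matrix (Fin n) (Fin n) ℝ) (a w : Fin n → ℝ) :
    (Matrix.of fun i j => M i j + a i * w j).det
      = M.det + ∑ k, a k * (M.updateRow k w).det := by
  classical
  set f : (Fin n → ℝ) [⋀^Fin n]→ₗ[ℝ] ℝ := Matrix.detRowAlternating with hf
  set m' : Fin n → Fin n → ℝ := fun i => a i • w with hm'
  have expand : (Matrix.of fun i j => M i j + a i * w j).det
      = ∑ s : Finset (Fin n), f (s.piecewise M m') := by
    have h1 : (Matrix.of fun i j => M i j + a i * w j)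
        = ((fun i => M i + m' i) : Matrix (Fin n) (Fin n) ℝ) := by
      ext i j; simp [hm']
    rw [h1]
    exact f.toMultilinearMap.map_add_univ M m'
  rw [expand]
  set S : Finset (Finset (Fin n)) :=
    insert Finset.univ (Finset.univ.image fun k => Finset.univ.erase k) with hS
  have hzero : ∀ s ∈ (Finset.univ : Finset (Finset (Fin n))), s ∉ S →
      f (s.piecewise M m') = 0 := by
    intro s _ hs
    simp only [hS, Finset.mem_insert, Finset.mem_image, Finset.mem_univ, true_and,
      not_or, not_exists] at hs
    obtain ⟨hs1, hs2⟩ := hs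
    have h0 : sᶜ ≠ ∅ := by
      intro h
      exact hs1 (by simpa using congrArg (fun t : Finset (Fin n) => tᶜ) h)
    have h1 : ∀ k, sᶜ ≠ {k} := by
      intro k h
      have h2 := congrArg (fun t : Finset (Fin n) => tᶜ) h
      simp only [compl_compl, Finset.compl_singleton] at h2
      exact hs2 k h2.symm
    have hcard : 1 < sᶜ.card := by
      rcases Nat.lt_or_ge 1 sᶜ.card with h | h
      · exact h
      · interval_cases hh : sᶜ.card
        · exact absurd (Finset.card_eq_zero.mp hh) h0
        · obtain ⟨k, hk⟩ := Finset.card_eq_one.mp hh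
          exact absurd hk (h1 k)
    obtain ⟨k, hk, k', hk', hne⟩ := Finset.one_lt_card.mp hcard
    have hks : k ∉ s := Finset.mem_compl.mp hk
    have hks' : k' ∉ s := Finset.mem_compl.mp hk'
    set v := s.piecewise M m' with hv
    have hvk : v k = a k • w := Finset.piecewise_eq_of_notMem _ _ _ hks
    have hvk' : v k' = a k' • w := Finset.piecewise_eq_of_notMem _ _ _ hks'
    have e1 : f v = a k • f (Function.update v k w) := by
      conv_lhs => rw [← Function.update_eq_self k v, hvk]
      exact f.map_update_smul v k (a k) w
    have e2 : f (Function.update v k w) =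
        a k' • f (Function.update (Function.update v k w) k' w) := by
      conv_lhs => rw [← Function.update_eq_self k' (Function.update v k w),
        Function.update_of_ne (Ne.symm hne) _ _, hvk']
      exact f.map_update_smul _ k' (a k') w
    have e3 : f (Function.update (Function.update v k w) k' w) = 0 := by
      refine f.map_eq_zero_of_eq _ (i := k) (j := k') ?_ hne
      rw [Function.update_of_ne hne, Function.update_self, Function.update_self]
    rw [e1, e2, e3, smul_zero, smul_zero]
  rw [← Finset.sum_subset (Finset.subset_univ S) hzero]
  have hnm : (Finset.univ : Finset (Fin n)) ∉
      (Finset.univ.image fun k => Finset.univ.erase k) := by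
    simp only [Finset.mem_image, Finset.mem_univ, true_and]
    rintro ⟨k, hk⟩
    have h := Finset.erase_ssubset (Finset.mem_univ k)
    rw [hk] at h
    exact lt_irrefl _ h
  have hinj : ∀ k ∈ (Finset.univ : Finset (Fin n)), ∀ k' ∈ (Finset.univ : Finset (Fin n)),
      Finset.univ.erase k = Finset.univ.erase k' → k = k' := by
    intro k _ k' _ hkk'
    by_contra hne
    have h : k ∈ Finset.univ.erase k' := Finset.mem_erase.mpr ⟨hne, Finset.mem_univ k⟩
    rw [← hkk'] at h
    exact (Finset.mem_erase.mp h).1 rfl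
  rw [hS, Finset.sum_insert hnm, Finset.sum_image hinj]
  erw [Finset.piecewise_univ]
  congr 1
  refine Finset.sum_congr rfl fun k _ => ?_
  erw [Finset.piecewise_erase_univ]
  have h1 : Function.update M k (m' k) = M.updateRow k (a k • w) := rfl
  rw [h1]
  exact Matrix.det_updateRow_smul M k (a k) w

/-- The bordered-determinant representation of `(d/ds - 2b) g_{l+1}` (formula (2.18)). -/
theorem stmt2
    (N : ℕ) (hN : 1 ≤ N) (b : ℝ) (hb : b ≠ 0)
    (p : Fin (2*N) → ℝ) (hp0 : ∀ i, p i ≠ 0)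
    (hpsum : ∀ i j, p i + p j ≠ 0)
    (hbm : ∀ i, 1 - b * p i ≠ 0) (hbp : ∀ i, 1 + b * p i ≠ 0)
    (ξ : Fin (2*N) → ℝ)
    (C : Matrix (Fin (2*N)) (Fin (2*N)) ℝ) (hC : ∀ i j, C i j = C j i)
    (φ : Fin (2*N) → ℤ → ℤ → ℝ → ℝ)
    (hφ : ∀ i n l s, φ i n l s =
      p i ^ n * ((1 + b * p i) / (1 - b * p i)) ^ l * Real.exp (s / p i + ξ i))
    (g : ℤ → ℝ → ℝ)
    (hg : ∀ l s, g l s =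
      Matrix.det (Matrix.of fun i j => C i j + φ i 0 l s * φ j 0 l s / (p i + p j)))
    (l : ℤ) (s : ℝ) :
    deriv (g (l+1)) s - 2*b * g (l+1) s = Matrix.det (Matrix.fromBlocks
        (Matrix.of fun i j => C i j + φ i 0 l s * φ j 0 l s / (p i + p j))
        (Matrix.of fun i (j : Fin 2) =>
          if j = 0 then φ i (-1) l s else 2*b * φ i 0 l s / (1 - b * p i))
        (Matrix.of fun (i : Fin 2) j =>
          if i = 0 then -φ j (-1) l s else -(φ j 0 l s / (1 - b * p j)))
        !![0, -(2*b); -1, 1]) := by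
  classical
  have h2b : (2:ℝ)*b ≠ 0 := mul_ne_zero two_ne_zero hb
  have hrne : ∀ i, (1 + b * p i) / (1 - b * p i) ≠ 0 := fun i => div_ne_zero (hbp i) (hbm i)
  set w : Fin (2*N) → ℝ := fun i => φ i (-1) l s + 2*b * φ i 0 l s / (1 - b * p i) with hw
  set M0 : Matrix (Fin (2*N)) (Fin (2*N)) ℝ :=
    Matrix.of (fun i j => C i j + φ i 0 l s * φ j 0 l s / (p i + p j)
      + 2*b * φ i 0 l s / (1 - b * p i) * (φ j 0 l s / (1 - b * p j))) with hM0
  -- derivative of φ i 0 (l+1)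
  have hW : ∀ i, HasDerivAt (fun t => φ i 0 (l+1) t) (w i) s := by
    intro i
    have h1 : HasDerivAt (fun t : ℝ => t / p i + ξ i) (1 / p i) s :=
      ((hasDerivAt_id s).div_const (p i)).add_const (ξ i)
    have h2 := h1.exp.const_mul (((1 + b * p i) / (1 - b * p i)) ^ (l+1) : ℝ)
    have h3 : HasDerivAt (fun t => φ i 0 (l+1) t)
        (((1 + b * p i) / (1 - b * p i)) ^ (l+1) * (Real.exp (s / p i + ξ i) * (1 / p i))) s := by
      refine h2.congr_of_eventuallyEq ?_
      filter_upwards with t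
      simp [hφ i 0 (l+1) t]
    have hval : (((1 + b * p i) / (1 - b * p i)) ^ (l+1) : ℝ)
        * (Real.exp (s / p i + ξ i) * (1 / p i)) = w i := by
      simp only [hw]
      rw [hφ i (-1) l s, hφ i 0 l s, _root_.zpow_neg_one, zpow_zero, zpow_add_one₀ (hrne i) l]
      have hh1 := hbm i; have hh2 := hp0 i
      field_simp
      ring
    exact hval ▸ h3
  have hw1 : ∀ i, w i * p i = φ i 0 (l+1) s := by
    intro i
    simp only [hw]
    rw [hφ i (-1) l s, hφ i 0 l s, hφ i 0 (l+1) s, _root_.zpow_neg_one, zpow_zero,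
      zpow_add_one₀ (hrne i) l]
    have hh1 := hbm i; have hh2 := hp0 i
    have hh1' : 1 - p i * b ≠ 0 := by rwa [mul_comm] at hh1
    field_simp
    ring
  have hent : ∀ i j, HasDerivAt
      (fun t => C i j + φ i 0 (l+1) t * φ j 0 (l+1) t / (p i + p j)) (w i * w j) s := by
    intro i j
    have h4 := (((hW i).mul (hW j)).div_const (p i + p j)).const_add (C i j)
    have hval : (w i * φ j 0 (l+1) s + φ i 0 (l+1) s * w j) / (p i + p j) = w i * w j := by
      rw [← hw1 i, ← hw1 j]
      have hij := hpsum i j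
      field_simp
      ring
    exact hval ▸ h4
  have hDet := hasDerivAt_det_aux
      (fun t => Matrix.of fun i j => C i j + φ i 0 (l+1) t * φ j 0 (l+1) t / (p i + p j))
      (Matrix.of fun i j => w i * w j) s (fun i j => hent i j)
  have hgder : deriv (g (l+1)) s
      = ∑ i, (((Matrix.of fun i j => C i j + φ i 0 (l+1) s * φ j 0 (l+1) s / (p i + p j))
          : Matrix (Fin (2*N)) (Fin (2*N)) ℝ).updateCol i fun r => w r * w i).det := by
    have hfn : g (l+1) = fun t =>
        ((Matrix.of fun i j => C i j + φ i 0 (l+1) t * φ j 0 (l+1) t / (p i + p j))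
          : Matrix (Fin (2*N)) (Fin (2*N)) ℝ).det := by
      funext t; exact hg (l+1) t
    rw [hfn]
    exact hDet.deriv
  -- identify the level-(l+1) matrix with M0
  have hMM : ((Matrix.of fun i j => C i j + φ i 0 (l+1) s * φ j 0 (l+1) s / (p i + p j))
      : Matrix (Fin (2*N)) (Fin (2*N)) ℝ) = M0 := by
    ext i j
    simp only [hM0, Matrix.of_apply]
    rw [hφ i 0 (l+1) s, hφ j 0 (l+1) s, hφ i 0 l s, hφ j 0 l s,
      zpow_add_one₀ (hrne i) l, zpow_add_one₀ (hrne j) l]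
    simp only [zpow_zero, one_mul]
    have hh1 := hbm i; have hh2 := hbm j; have hh3 := hpsum i j
    field_simp
    ring
  -- symmetry of M0
  have hsymm : M0ᵀ = M0 := by
    ext i j
    simp only [Matrix.transpose_apply, hM0, Matrix.of_apply]
    rw [hC j i, add_comm (p j) (p i)]
    ring
  have hud : ∀ k, (M0.updateCol k w).det = (M0.updateRow k w).det := by
    intro k
    conv_rhs => rw [← hsymm]
    rw [← Matrix.det_transpose (M0ᵀ.updateRow k w), Matrix.updateRow_transpose,
      Matrix.transpose_transpose]
  have hgder2 : deriv (g (l+1)) s = ∑ i, w i * (M0.updateRow i w).det := by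
    rw [hgder]
    refine Finset.sum_congr rfl fun i _ => ?_
    rw [hMM]
    have hsm : (fun r => w r * w i) = w i • w := by
      funext r; simp [mul_comm]
    rw [hsm, Matrix.det_updateCol_smul, hud i]
  -- invertibility of the corner block
  have hmul1 : (!![0, -(2*b); -1, 1] : Matrix (Fin 2) (Fin 2) ℝ)
      * !![-(1/(2*b)), -1; -(1/(2*b)), 0] = 1 := by
    ext i j
    fin_cases i <;> fin_cases j <;>
      simp [Matrix.mul_apply, Fin.sum_univ_two, Matrix.one_apply] <;> field_simp <;> ring_nf
  have hmul2 : (!![-(1/(2*b)), -1; -(1/(2*b)), 0] : Matrix (Fin 2) (Fin 2) ℝ)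
      * !![0, -(2*b); -1, 1] = 1 := by
    ext i j
    fin_cases i <;> fin_cases j <;>
      simp [Matrix.mul_apply, Fin.sum_univ_two, Matrix.one_apply] <;> field_simp <;> ring_nf
  haveI hDinv : Invertible (!![0, -(2*b); -1, 1] : Matrix (Fin 2) (Fin 2) ℝ) :=
    ⟨!![-(1/(2*b)), -1; -(1/(2*b)), 0], hmul2, hmul1⟩
  have hDi : (⅟(!![0, -(2*b); -1, 1] : Matrix (Fin 2) (Fin 2) ℝ))
      = !![-(1/(2*b)), -1; -(1/(2*b)), 0] := invOf_eq_right_inv hmul1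
  rw [hgder2, hg (l+1) s, hMM, Matrix.det_fromBlocks₂₂, hDi, Matrix.det_fin_two_of]
  have hSchur : (Matrix.of fun i j => C i j + φ i 0 l s * φ j 0 l s / (p i + p j))
        - (Matrix.of fun i (j : Fin 2) =>
            if j = 0 then φ i (-1) l s else 2*b * φ i 0 l s / (1 - b * p i))
          * !![-(1/(2*b)), -1; -(1/(2*b)), 0]
          * (Matrix.of fun (i : Fin 2) j =>
            if i = 0 then -φ j (-1) l s else -(φ j 0 l s / (1 - b * p j)))
      = Matrix.of fun i j => M0 i j + (-(w i)/(2*b)) * w j := by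
    ext i j
    simp only [Matrix.sub_apply, Matrix.mul_apply, Fin.sum_univ_two, Matrix.of_apply,
      hM0, hw, Matrix.cons_val', Matrix.cons_val_zero, Matrix.cons_val_one, Matrix.head_cons,
      Matrix.empty_val', Matrix.cons_val_fin_one, Matrix.head_fin_const]
    norm_num
    have hh1 := hbm i; have hh2 := hbm j; have hh3 := hpsum i j
    have hh1' : 1 - p i * b ≠ 0 := by rwa [mul_comm] at hh1
    have hh2' : 1 - p j * b ≠ 0 := by rwa [mul_comm] at hh2
    field_simp
    ring
  rw [hSchur, det_add_rank_one M0 (fun i => -(w i)/(2*b)) w]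
  rw [mul_add, Finset.mul_sum]
  rw [Finset.sum_congr rfl fun k (_ : k ∈ Finset.univ) =>
    (by field_simp; ring :
      (0 * 1 - -(2*b) * -1) * (-(w k)/(2*b) * (M0.updateRow k w).det)
        = w k * (M0.updateRow k w).det)]
  ring
end

section
/- Under the reduction data, the matrix defined by c_{i,j} = -C_{i,j}·(2 p_i²/p_j)·((1 - b p_j)/(1 + b p_i)) is skew-symmetric: c_{i,j} = -c_{j,i} for all 1 ≤ i, j ≤ 2N. -/
/-- Under the reduction data, `c_{i,j} = -C_{i,j}·(2p_i²/p_j)·((1-bp_j)/(1+bp_i))`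
is skew-symmetric. -/
theorem stmt3
    (N : ℕ) (hN : 1 ≤ N) (b : ℝ) (hb : b ≠ 0)
    (p : Fin (2*N) → ℝ) (hp0 : ∀ i, p i ≠ 0)
    (hbm : ∀ i, 1 - b * p i ≠ 0) (hbp : ∀ i, 1 + b * p i ≠ 0)
    (c : Fin (2*N) → ℝ) (hc : ∀ i, c i.rev = c i)
    (C : Matrix (Fin (2*N)) (Fin (2*N)) ℝ)
    (hC : ∀ i j, C i j = if j = i.rev then c i else 0)
    (hred : ∀ i, (p i)^3 * (1 - b^2 * (p i.rev)^2) = -(p i.rev)^3 * (1 - b^2 * (p i)^2))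
    (cc : Matrix (Fin (2*N)) (Fin (2*N)) ℝ)
    (hcc : ∀ i j, cc i j = -C i j * (2 * (p i)^2 / p j) * ((1 - b * p j) / (1 + b * p i))) :
    ∀ i j, cc i j = - cc j i := by
  intro i j
  rw [hcc, hcc, hC, hC]
  by_cases h : j = i.rev
  · subst h
    simp only [Fin.rev_rev, if_pos rfl, ↓reduceIte]
    have hr := hred i
    have hci := hc i
    have h1 := hp0 i; have h2 := hp0 i.rev
    have h5 := hbp i; have h6 := hbp i.rev
    have h5' : 1 + p i * b ≠ 0 := by rw [mul_comm]; exact h5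
    have h6' : 1 + p i.rev * b ≠ 0 := by rw [mul_comm]; exact h6
    rw [hci]
    field_simp
    linear_combination (-c i) * hr
  · have h' : i ≠ j.rev := by
      intro h'; exact h (by rw [h', Fin.rev_rev])
    simp [h, h']
end

section
/- Under the bilinear system, the auxiliary variable r_l := f_l/g_l satisfies r_{l+1}'(s)/r_{l+1}(s) = -(u_{l+1} - u_l)/δ_l + b - δ_l/2 for all l and s. (Equation (2.43) of the paper.) -/
/-- Equation (2.43): `(ln r_{l+1})_s = -(u_{l+1}-u_l)/δ_l + b - δ_l/2`
for the auxiliary variable `r_l = f_l/g_l`. -/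
theorem stmt8
    (b c' : ℝ) (hb : b ≠ 0) (hc' : c' ≠ 0)
    (f g τ : ℤ → ℝ → ℝ)
    (hfsmooth : ∀ l, ContDiff ℝ (⊤ : ℕ∞) (f l))
    (hgsmooth : ∀ l, ContDiff ℝ (⊤ : ℕ∞) (g l))
    (hτsmooth : ∀ l, ContDiff ℝ (⊤ : ℕ∞) (τ l))
    (hτpos : ∀ l s, 0 < τ l s) (hgne : ∀ l s, g l s ≠ 0) (hfne : ∀ l s, f l s ≠ 0)
    (hbil1 : ∀ (l : ℤ) (s : ℝ),
      deriv (g (l+1)) s * g l s - g (l+1) s * deriv (g l) s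
        - 2*b * (g (l+1) s * g l s) = -2*b * (f l s)^2)
    (hbil2 : ∀ (l : ℤ) (s : ℝ),
      deriv (τ (l+1)) s * τ l s - τ (l+1) s * deriv (τ l) s
        - b * (τ (l+1) s * τ l s) = -b * c' * g (l+1) s)
    (hbil3 : ∀ (l : ℤ) (s : ℝ), (τ l s)^2 = c' * f l s)
    (u x δ r : ℤ → ℝ → ℝ)
    (hu : ∀ l s, u l s = -2 * deriv (deriv (fun t => Real.log (τ l t))) s)
    (hx : ∀ l s, x l s = 2*(l:ℝ)*b - 2 * deriv (fun t => Real.log (τ l t)) s)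
    (hδ : ∀ l s, δ l s = x (l+1) s - x l s)
    (hδne : ∀ l s, δ l s ≠ 0)
    (hr : ∀ l s, r l s = f l s / g l s) :
    ∀ (l : ℤ) (s : ℝ),
      deriv (r (l+1)) s / r (l+1) s
        = -((u (l+1) s - u l s) / δ l s) + b - δ l s / 2 := by
  intro l s
  have hτd : ∀ m, Differentiable ℝ (τ m) := fun m => (hτsmooth m).differentiable (by simp)
  have hτd2 : ∀ m, Differentiable ℝ (deriv (τ m)) := by
    intro m
    have h1 : ContDiff ℝ ((⊤:ℕ∞):WithTop ℕ∞) (τ m) := (hτsmooth m).of_le (by simp)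
    exact (contDiff_infty_iff_deriv.mp h1).2.differentiable (by simp)
  have hfd : ∀ m, Differentiable ℝ (f m) := fun m => (hfsmooth m).differentiable (by simp)
  have hgd : ∀ m, Differentiable ℝ (g m) := fun m => (hgsmooth m).differentiable (by simp)
  have hlogd : ∀ m, deriv (fun t => Real.log (τ m t)) = fun t => deriv (τ m) t / τ m t :=
    fun m => funext fun t => (((hτd m t).hasDerivAt).log (hτpos m t).ne').deriv
  -- second derivative of log τ
  have hus : ∀ m, u m s = -2 * ((deriv (deriv (τ m)) s * τ m s - deriv (τ m) s * deriv (τ m) s)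
      / (τ m s)^2) := by
    intro m
    rw [hu, hlogd]
    congr 1
    exact (((hτd2 m s).hasDerivAt).div ((hτd m s).hasDerivAt) (hτpos m s).ne').deriv
  have hδval : δ l s = 2*b - 2*(deriv (τ (l+1)) s / τ (l+1) s)
      + 2*(deriv (τ l) s / τ l s) := by
    rw [hδ, hx, hx]
    simp only [hlogd]
    push_cast
    ring
  -- derivative of r (l+1)
  have hre : r (l+1) = fun t => f (l+1) t / g (l+1) t := funext fun t => hr (l+1) t
  have hdr : deriv (r (l+1)) s
      = (deriv (f (l+1)) s * g (l+1) s - f (l+1) s * deriv (g (l+1)) s) / (g (l+1) s)^2 := by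
    rw [hre]
    exact (((hfd (l+1) s).hasDerivAt).div ((hgd (l+1) s).hasDerivAt) (hgne (l+1) s)).deriv
  -- differentiate bilinear relation 3 at l+1
  have h3d : 2 * τ (l+1) s * deriv (τ (l+1)) s = c' * deriv (f (l+1)) s := by
    have h1 : HasDerivAt (fun t => (τ (l+1) t)^2) (2 * τ (l+1) s * deriv (τ (l+1)) s) s := by
      simpa using ((hτd (l+1) s).hasDerivAt).fun_pow 2
    have h1' : HasDerivAt (fun t => c' * f (l+1) t) (2 * τ (l+1) s * deriv (τ (l+1)) s) s := by
      have : (fun t => (τ (l+1) t)^2) = fun t => c' * f (l+1) t := funext fun t => hbil3 (l+1) t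
      rwa [this] at h1
    have h2 : HasDerivAt (fun t => c' * f (l+1) t) (c' * deriv (f (l+1)) s) s :=
      ((hfd (l+1) s).hasDerivAt).const_mul c'
    exact h1'.unique h2
  -- differentiate bilinear relation 2
  have h2d : (deriv (deriv (τ (l+1))) s * τ l s + deriv (τ (l+1)) s * deriv (τ l) s)
      - (deriv (τ (l+1)) s * deriv (τ l) s + τ (l+1) s * deriv (deriv (τ l)) s)
      - b * (deriv (τ (l+1)) s * τ l s + τ (l+1) s * deriv (τ l) s)
      = -b * c' * deriv (g (l+1)) s := by
    have hL : HasDerivAt (fun t => deriv (τ (l+1)) t * τ l t - τ (l+1) t * deriv (τ l) t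
        - b * (τ (l+1) t * τ l t))
        ((deriv (deriv (τ (l+1))) s * τ l s + deriv (τ (l+1)) s * deriv (τ l) s)
          - (deriv (τ (l+1)) s * deriv (τ l) s + τ (l+1) s * deriv (deriv (τ l)) s)
          - b * (deriv (τ (l+1)) s * τ l s + τ (l+1) s * deriv (τ l) s)) s := by
      exact ((((hτd2 (l+1) s).hasDerivAt).mul ((hτd l s).hasDerivAt)).sub
        (((hτd (l+1) s).hasDerivAt).mul ((hτd2 l s).hasDerivAt))).sub
        ((((hτd (l+1) s).hasDerivAt).mul ((hτd l s).hasDerivAt)).const_mul b)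
    have hfun : (fun t => deriv (τ (l+1)) t * τ l t - τ (l+1) t * deriv (τ l) t
        - b * (τ (l+1) t * τ l t)) = fun t => -b * c' * g (l+1) t := by
      funext t
      have := hbil2 l t
      linarith [hbil2 l t]
    rw [hfun] at hL
    have hR : HasDerivAt (fun t => -b * c' * g (l+1) t) (-b * c' * deriv (g (l+1)) s) s := by
      simpa [mul_assoc] using ((hgd (l+1) s).hasDerivAt).const_mul (-b * c')
    exact hL.unique hR
  -- solve for f, g and their derivatives in terms of τ data
  have hbc : b * c' ≠ 0 := mul_ne_zero hb hc'
  have hf1 : f (l+1) s = (τ (l+1) s)^2 / c' := by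
    field_simp
    linarith [hbil3 (l+1) s]
  have hf1' : deriv (f (l+1)) s = 2 * τ (l+1) s * deriv (τ (l+1)) s / c' := by
    field_simp
    linarith [h3d]
  have hg1 : g (l+1) s = (deriv (τ (l+1)) s * τ l s - τ (l+1) s * deriv (τ l) s
      - b * (τ (l+1) s * τ l s)) / (-(b * c')) := by
    rw [eq_div_iff (neg_ne_zero.mpr hbc)]
    linarith [hbil2 l s]
  have hg1' : deriv (g (l+1)) s = ((deriv (deriv (τ (l+1))) s * τ l s
      + deriv (τ (l+1)) s * deriv (τ l) s)
      - (deriv (τ (l+1)) s * deriv (τ l) s + τ (l+1) s * deriv (deriv (τ l)) s)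
      - b * (deriv (τ (l+1)) s * τ l s + τ (l+1) s * deriv (τ l) s)) / (-(b * c')) := by
    rw [eq_div_iff (neg_ne_zero.mpr hbc)]
    linarith [h2d]
  have hA : deriv (τ (l+1)) s * τ l s - τ (l+1) s * deriv (τ l) s
      - b * (τ (l+1) s * τ l s) ≠ 0 := by
    rw [hbil2 l s]
    exact mul_ne_zero (mul_ne_zero (neg_ne_zero.mpr hb) hc') (hgne (l+1) s)
  have hδv : (2*b - 2*(deriv (τ (l+1)) s / τ (l+1) s) + 2*(deriv (τ l) s / τ l s)) ≠ 0 := by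
    rw [← hδval]; exact hδne l s
  have ha0 : τ l s ≠ 0 := (hτpos l s).ne'
  have ha1 : τ (l+1) s ≠ 0 := (hτpos (l+1) s).ne'
  have hδ2 : δ l s = -2 * (deriv (τ (l+1)) s * τ l s - τ (l+1) s * deriv (τ l) s
      - b * (τ (l+1) s * τ l s)) / (τ (l+1) s * τ l s) := by
    rw [hδval]
    field_simp
    ring
  rw [hdr, hr, hus, hus, hδ2, hf1, hf1', hg1, hg1']
  have hA' : deriv (τ (l+1)) s * τ l s - τ (l+1) s * deriv (τ l) s - τ (l+1) s * τ l s * b ≠ 0 := by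
    rw [show τ (l+1) s * τ l s * b = b * (τ (l+1) s * τ l s) by ring]; exact hA
  field_simp
  ring
end

section
/- Under the bilinear system, the auxiliary variable r_l := f_l/g_l satisfies -(u_{l+1} - u_l)/δ_l + (u_l - u_{l-1})/δ_{l-1} + (1/2)δ_l + (1/2)δ_{l-1} = (8 b³/δ_l²)·(r_l/r_{l+1}) for all l and s. -/
/-- Equation (2.44): `-(u_{l+1}-u_l)/δ_l + (u_l-u_{l-1})/δ_{l-1} + δ_l/2 + δ_{l-1}/2
= (8b³/δ_l²)·(r_l/r_{l+1})` for the auxiliary variable `r_l = f_l/g_l`. -/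
theorem stmt9
    (b c' : ℝ) (hb : b ≠ 0) (hc' : c' ≠ 0)
    (f g τ : ℤ → ℝ → ℝ)
    (hfsmooth : ∀ l, ContDiff ℝ (⊤ : ℕ∞) (f l))
    (hgsmooth : ∀ l, ContDiff ℝ (⊤ : ℕ∞) (g l))
    (hτsmooth : ∀ l, ContDiff ℝ (⊤ : ℕ∞) (τ l))
    (hτpos : ∀ l s, 0 < τ l s) (hgne : ∀ l s, g l s ≠ 0) (hfne : ∀ l s, f l s ≠ 0)
    (hbil1 : ∀ (l : ℤ) (s : ℝ),
      deriv (g (l+1)) s * g l s - g (l+1) s * deriv (g l) s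
        - 2*b * (g (l+1) s * g l s) = -2*b * (f l s)^2)
    (hbil2 : ∀ (l : ℤ) (s : ℝ),
      deriv (τ (l+1)) s * τ l s - τ (l+1) s * deriv (τ l) s
        - b * (τ (l+1) s * τ l s) = -b * c' * g (l+1) s)
    (hbil3 : ∀ (l : ℤ) (s : ℝ), (τ l s)^2 = c' * f l s)
    (u x δ r : ℤ → ℝ → ℝ)
    (hu : ∀ l s, u l s = -2 * deriv (deriv (fun t => Real.log (τ l t))) s)
    (hx : ∀ l s, x l s = 2*(l:ℝ)*b - 2 * deriv (fun t => Real.log (τ l t)) s)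
    (hδ : ∀ l s, δ l s = x (l+1) s - x l s)
    (hδne : ∀ l s, δ l s ≠ 0)
    (hr : ∀ l s, r l s = f l s / g l s) :
    ∀ (l : ℤ) (s : ℝ),
      -((u (l+1) s - u l s) / δ l s) + (u l s - u (l-1) s) / δ (l-1) s
        + (1/2) * δ l s + (1/2) * δ (l-1) s
        = 8 * b^3 / (δ l s)^2 * (r l s / r (l+1) s) := by
  have hτne : ∀ l s, τ l s ≠ 0 := fun l s => (hτpos l s).ne'
  have hτd : ∀ l, Differentiable ℝ (τ l) := fun l => (hτsmooth l).differentiable (by simp)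
  have hgd : ∀ l, Differentiable ℝ (g l) := fun l => (hgsmooth l).differentiable (by simp)
  have hτ'd : ∀ l, Differentiable ℝ (deriv (τ l)) := by
    intro l
    have h2 : ContDiff ℝ (↑(⊤:ℕ∞)) (τ l) := (hτsmooth l).of_le (by simp)
    exact (contDiff_infty_iff_deriv.mp h2).2.differentiable (by simp)
  -- derivative of log ∘ τ
  have hlogd : ∀ l, deriv (fun t => Real.log (τ l t)) = fun t => deriv (τ l) t / τ l t := by
    intro l; funext t
    exact (((hτd l t).hasDerivAt).log (hτne l t)).deriv
  have hLd : ∀ l, Differentiable ℝ (fun t => deriv (τ l) t / τ l t) :=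
    fun l => (hτ'd l).div (hτd l) (hτne l)
  -- closed form for δ
  have hδf : ∀ l s, δ l s = 2*b*c' * g (l+1) s / (τ (l+1) s * τ l s) := by
    intro l s
    rw [hδ, hx, hx, hlogd, hlogd]
    push_cast
    have h2 := hbil2 l s
    have hA := hτne (l+1) s
    have hB := hτne l s
    field_simp
    linear_combination (-1 : ℝ) * h2
  -- u_{l+1} - u_l as an explicit derivative
  have hkey : ∀ (l : ℤ) (s : ℝ), u (l+1) s - u l s =
      2*b*c' * ((deriv (g (l+1)) s * (τ (l+1) s * τ l s)
        - g (l+1) s * (deriv (τ (l+1)) s * τ l s + τ (l+1) s * deriv (τ l) s))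
        / (τ (l+1) s * τ l s)^2) := by
    intro l s
    have hF : (fun t => deriv (τ (l+1)) t / τ (l+1) t - deriv (τ l) t / τ l t)
        = fun t => b - b*c' * (g (l+1) t / (τ (l+1) t * τ l t)) := by
      funext t
      have h2 := hbil2 l t
      have hA := hτne (l+1) t
      have hB := hτne l t
      field_simp
      linear_combination h2
    have hstep : u (l+1) s - u l s
        = -2 * deriv (fun t => deriv (τ (l+1)) t / τ (l+1) t - deriv (τ l) t / τ l t) s := by
      rw [hu, hu, hlogd, hlogd, deriv_fun_sub ((hLd (l+1)) s) ((hLd l) s)]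
      ring
    rw [hstep, hF]
    have hprod : HasDerivAt (fun t => τ (l+1) t * τ l t)
        (deriv (τ (l+1)) s * τ l s + τ (l+1) s * deriv (τ l) s) s :=
      ((hτd (l+1) s).hasDerivAt).mul ((hτd l s).hasDerivAt)
    have hdiv : HasDerivAt (fun t => g (l+1) t / (τ (l+1) t * τ l t))
        ((deriv (g (l+1)) s * (τ (l+1) s * τ l s)
          - g (l+1) s * (deriv (τ (l+1)) s * τ l s + τ (l+1) s * deriv (τ l) s))
          / (τ (l+1) s * τ l s)^2) s :=
      ((hgd (l+1) s).hasDerivAt).div hprod (mul_ne_zero (hτne (l+1) s) (hτne l s))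
    have hfinal : HasDerivAt (fun t => b - b*c' * (g (l+1) t / (τ (l+1) t * τ l t)))
        (-(b*c' * ((deriv (g (l+1)) s * (τ (l+1) s * τ l s)
          - g (l+1) s * (deriv (τ (l+1)) s * τ l s + τ (l+1) s * deriv (τ l) s))
          / (τ (l+1) s * τ l s)^2))) s := (hdiv.const_mul (b*c')).const_sub b
    rw [hfinal.deriv]
    ring
  intro l s
  have hli : l - 1 + 1 = l := by ring
  have e1 := hkey l s
  have e2 := hkey (l-1) s
  have c1 := hδf l s
  have c2 := hδf (l-1) s
  rw [hli] at e2 c2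
  set T := τ l s
  set T1 := τ (l+1) s
  set T0 := τ (l-1) s
  set dT := deriv (τ l) s
  set dT1 := deriv (τ (l+1)) s
  set dT0 := deriv (τ (l-1)) s
  set G1 := g (l+1) s
  set G := g l s
  set dG1 := deriv (g (l+1)) s
  set dG := deriv (g l) s
  have hTne : T ≠ 0 := hτne l s
  have hT1ne : T1 ≠ 0 := hτne (l+1) s
  have hT0ne : T0 ≠ 0 := hτne (l-1) s
  have hGne : G ≠ 0 := hgne l s
  have hG1ne : G1 ≠ 0 := hgne (l+1) s
  have hFne : f l s ≠ 0 := hfne l s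
  have hF1ne : f (l+1) s ≠ 0 := hfne (l+1) s
  -- step identities
  have h1 : (u (l+1) s - u l s) / δ l s = dG1/G1 - dT1/T1 - dT/T := by
    rw [e1, c1]; field_simp; ring
  have h2 : (u l s - u (l-1) s) / δ (l-1) s = dG/G - dT/T - dT0/T0 := by
    rw [e2, c2]; field_simp; ring
  have h3 : (1/2 : ℝ) * δ l s = b - dT1/T1 + dT/T := by
    rw [c1]
    have h2l := hbil2 l s
    field_simp
    linear_combination h2l

  have h4 : (1/2 : ℝ) * δ (l-1) s = b - dT/T + dT0/T0 := by
    rw [c2]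
    have h2l := hbil2 (l-1) s
    rw [hli] at h2l
    field_simp
    linear_combination h2l
  have hfl : f l s = T^2/c' := by
    have := hbil3 l s; field_simp; linear_combination -this
  have hfl1 : f (l+1) s = T1^2/c' := by
    have := hbil3 (l+1) s; field_simp; linear_combination -this
  have h5 : 8 * b^3 / (δ l s)^2 * (r l s / r (l+1) s) = 2*b*(f l s)^2/(G1*G) := by
    rw [c1, hr, hr, hfl, hfl1]
    rw [show g l s = G from rfl, show g (l+1) s = G1 from rfl]
    field_simp
    ring
  have h6 : dG1/G1 - dG/G = 2*b - 2*b*(f l s)^2/(G1*G) := by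
    have h1l := hbil1 l s
    field_simp
    linear_combination h1l
  rw [h1, h2, h3, h4, h5]
  linear_combination (-1 : ℝ) * h6
end

section
/- Under the reduction data, the Pfaffian tau function satisfies ∂τ_l/∂r (s,r) = b² ∂τ_l/∂s (s,r) for every integer l and all real s, r. (Equation (3.19) of the paper.) -/
/-- The Pfaffian of a `2n × 2n` real matrix,
`Pf(B) = (1/(2^n n!)) Σ_{σ∈S_{2n}} sgn(σ) Π_{k=1}^n B_{σ(2k-1),σ(2k)}`. -/
noncomputable def pfaffian (n : ℕ) (B : Matrix (Fin (2*n)) (Fin (2*n)) ℝ) : ℝ :=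
  (1 / (2^n * (Nat.factorial n : ℝ))) *
    ∑ σ : Equiv.Perm (Fin (2*n)), ((Equiv.Perm.sign σ : ℤ) : ℝ) *
      ∏ k : Fin n, B (σ ⟨2*(k:ℕ), by have := k.isLt; omega⟩)
        (σ ⟨2*(k:ℕ)+1, by have := k.isLt; omega⟩)

/-- Partial derivative in the first variable `s` of a function of `(s, r)`. -/
noncomputable def dS (f : ℝ → ℝ → ℝ) : ℝ → ℝ → ℝ := fun s r => deriv (fun t => f t r) s

/-- Partial derivative in the second variable `r` of a function of `(s, r)`. -/
noncomputable def dR (f : ℝ → ℝ → ℝ) : ℝ → ℝ → ℝ := fun s r => deriv (fun t => f s t) r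

/-- index `2k` in `Fin (2n)` -/
def idx0 (n : ℕ) (k : Fin n) : Fin (2*n) := ⟨2*(k:ℕ), by have := k.isLt; omega⟩
/-- index `2k+1` in `Fin (2n)` -/
def idx1 (n : ℕ) (k : Fin n) : Fin (2*n) := ⟨2*(k:ℕ)+1, by have := k.isLt; omega⟩

/-- matrix entry function -/
noncomputable def Ent (n : ℕ) (cc a : Matrix (Fin (2*n)) (Fin (2*n)) ℝ)
    (α β : Fin (2*n) → ℝ) (s t : ℝ) (i j : Fin (2*n)) : ℝ :=
  cc i j + a i j * Real.exp (s * (α i + α j) + t * (β i + β j))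

noncomputable def FF (n : ℕ) (cc a : Matrix (Fin (2*n)) (Fin (2*n)) ℝ)
    (α β : Fin (2*n) → ℝ) (K s t : ℝ) : ℝ :=
  K * ∑ σ : Equiv.Perm (Fin (2*n)), ((Equiv.Perm.sign σ : ℤ) : ℝ) *
    ∏ k : Fin n, Ent n cc a α β s t (σ (idx0 n k)) (σ (idx1 n k))

lemma FF_symm (n : ℕ) (cc a : Matrix (Fin (2*n)) (Fin (2*n)) ℝ)
    (α β : Fin (2*n) → ℝ) (K s t : ℝ) :
    FF n cc a α β K s t = FF n cc a β α K t s := by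
  simp only [FF]
  congr 1
  apply Finset.sum_congr rfl
  intro σ _
  congr 1
  apply Finset.prod_congr rfl
  intro k _
  simp only [Ent]
  rw [add_comm (s * (α (σ (idx0 n k)) + α (σ (idx1 n k))))]

lemma FF_hasDerivAt (n : ℕ) (cc a : Matrix (Fin (2*n)) (Fin (2*n)) ℝ)
    (α β : Fin (2*n) → ℝ) (K s r : ℝ) :
    HasDerivAt (fun t => FF n cc a α β K s t)
      (K * ∑ σ : Equiv.Perm (Fin (2*n)), ((Equiv.Perm.sign σ : ℤ) : ℝ) *
        ∑ k : Fin n, (∏ j ∈ Finset.univ.erase k,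
            Ent n cc a α β s r (σ (idx0 n j)) (σ (idx1 n j))) *
          ((β (σ (idx0 n k)) + β (σ (idx1 n k))) *
            (Ent n cc a α β s r (σ (idx0 n k)) (σ (idx1 n k))
              - cc (σ (idx0 n k)) (σ (idx1 n k))))) r := by
  simp only [FF]
  apply HasDerivAt.const_mul
  apply HasDerivAt.fun_sum
  intro σ _
  apply HasDerivAt.const_mul
  have h := HasDerivAt.fun_finsetProd (u := (Finset.univ : Finset (Fin n))) (x := r)
    (f := fun (k : Fin n) t => Ent n cc a α β s t (σ (idx0 n k)) (σ (idx1 n k)))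
    (f' := fun k => (β (σ (idx0 n k)) + β (σ (idx1 n k))) *
      (Ent n cc a α β s r (σ (idx0 n k)) (σ (idx1 n k)) - cc (σ (idx0 n k)) (σ (idx1 n k))))
    (fun k _ => by
      set i := σ (idx0 n k)
      set j := σ (idx1 n k)
      have hlin : HasDerivAt (fun t : ℝ => s * (α i + α j) + t * (β i + β j))
          (β i + β j) r := by
        simpa using ((hasDerivAt_id r).mul_const (β i + β j)).const_add (s * (α i + α j))
      have h2 := (hlin.exp.const_mul (a i j)).const_add (cc i j)
      have h3 : HasDerivAt (fun t => Ent n cc a α β s t i j)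
          (a i j * (Real.exp (s * (α i + α j) + r * (β i + β j)) * (β i + β j))) r := by
        simpa [Ent] using h2
      refine h3.congr_deriv ?_
      simp only [Ent]
      ring)
  simpa [smul_eq_mul] using h

lemma sum_fin_pair (n : ℕ) (f : Fin (2*n) → ℝ) :
    ∑ k : Fin n, (f (idx0 n k) + f (idx1 n k)) = ∑ m : Fin (2*n), f m := by
  classical
  set g : ℕ → ℝ := fun j => if h : j < 2*n then f ⟨j, h⟩ else 0 with hg
  have key : ∀ m : ℕ, ∑ k ∈ Finset.range m, (g (2*k) + g (2*k+1))
      = ∑ j ∈ Finset.range (2*m), g j := by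
    intro m
    induction m with
    | zero => simp
    | succ m ih =>
      have h2 : 2*(m+1) = 2*m+1+1 := by ring
      rw [Finset.sum_range_succ, ih, h2, Finset.sum_range_succ, Finset.sum_range_succ]
      ring
  have h1 : ∑ k : Fin n, (f (idx0 n k) + f (idx1 n k))
      = ∑ k ∈ Finset.range n, (g (2*k) + g (2*k+1)) := by
    rw [← Fin.sum_univ_eq_sum_range (fun k => g (2*k) + g (2*k+1)) n]
    apply Finset.sum_congr rfl
    intro k _
    have hk := k.isLt
    rw [hg]
    simp only []
    rw [dif_pos (by omega : 2*(k:ℕ) < 2*n), dif_pos (by omega : 2*(k:ℕ)+1 < 2*n)]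
    rfl
  have h2 : ∑ m : Fin (2*n), f m = ∑ j ∈ Finset.range (2*n), g j := by
    rw [← Fin.sum_univ_eq_sum_range g (2*n)]
    apply Finset.sum_congr rfl
    intro m _
    rw [hg]
    simp only []
    rw [dif_pos m.isLt]
  rw [h1, key, ← h2]

lemma term_cancel (b Pe Pu E cc ai aj bi bj : ℝ)
    (h1 : Pe * E = Pu)
    (h0 : ((bi - b^2*ai) + (bj - b^2*aj)) * cc = 0) :
    Pe * ((bi + bj) * (E - cc)) - b^2 * (Pe * ((ai + aj) * (E - cc)))
      = ((bi - b^2*ai) + (bj - b^2*aj)) * Pu := by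
  linear_combination ((bi - b^2*ai) + (bj - b^2*aj)) * h1 - Pe * h0

/-- Equation (3.19): under the reduction, `∂τ_l/∂r = b² ∂τ_l/∂s`. -/
theorem stmt14
    (N : ℕ) (hN : 1 ≤ N) (b : ℝ) (hb : b ≠ 0)
    (p : Fin (2*N) → ℝ) (hp0 : ∀ i, p i ≠ 0)
    (hpsum : ∀ i j, p i + p j ≠ 0)
    (hbm : ∀ i, 1 - b * p i ≠ 0) (hbp : ∀ i, 1 + b * p i ≠ 0)
    (ξ : Fin (2*N) → ℝ)
    (φ : Fin (2*N) → ℤ → ℝ → ℝ → ℝ)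
    (hφ : ∀ i l s r, φ i l s r =
      ((1 + b * p i) / (1 - b * p i)) ^ l * Real.exp (s / p i + r / (p i)^3 + ξ i))
    (c : Fin (2*N) → ℝ) (hc : ∀ i, c i.rev = c i)
    (C : Matrix (Fin (2*N)) (Fin (2*N)) ℝ)
    (hC : ∀ i j, C i j = if j = i.rev then c i else 0)
    (cc : Matrix (Fin (2*N)) (Fin (2*N)) ℝ)
    (hcc : ∀ i j, cc i j = -C i j * (2 * (p i)^2 / p j) * ((1 - b * p j) / (1 + b * p i)))
    (hred : ∀ i, (p i)^3 * (1 - b^2 * (p i.rev)^2) = -(p i.rev)^3 * (1 - b^2 * (p i)^2))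
    (τ : ℤ → ℝ → ℝ → ℝ)
    (hτ : ∀ l s r, τ l s r = pfaffian N (Matrix.of fun i j =>
      cc i j + ((p i - p j) / (p i + p j)) * φ i l s r * φ j l s r)) :
    ∀ (l : ℤ) (s r : ℝ), dR (τ l) s r = b^2 * dS (τ l) s r := by
  intro l s r
  classical
  set α : Fin (2*N) → ℝ := fun i => 1 / p i with hα
  set β : Fin (2*N) → ℝ := fun i => 1 / (p i)^3 with hβ
  set μ : Fin (2*N) → ℝ := fun i => β i - b^2 * α i with hμ
  set a : Matrix (Fin (2*N)) (Fin (2*N)) ℝ := fun i j =>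
    ((p i - p j) / (p i + p j)) *
      (((1 + b * p i) / (1 - b * p i)) ^ l * ((1 + b * p j) / (1 - b * p j)) ^ l *
        Real.exp (ξ i + ξ j)) with ha
  set K : ℝ := 1 / (2^N * (Nat.factorial N : ℝ)) with hK
  -- entries agree
  have hent : ∀ s t (i j : Fin (2*N)),
      cc i j + ((p i - p j) / (p i + p j)) * φ i l s t * φ j l s t
        = Ent N cc a α β s t i j := by
    intro s t i j
    rw [hφ, hφ]
    simp only [Ent, ha, hα, hβ]
    have hexp : Real.exp (s / p i + t / (p i)^3 + ξ i) * Real.exp (s / p j + t / (p j)^3 + ξ j)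
        = Real.exp (ξ i + ξ j) *
          Real.exp (s * (1 / p i + 1 / p j) + t * (1 / (p i)^3 + 1 / (p j)^3)) := by
      rw [← Real.exp_add, ← Real.exp_add]
      congr 1
      ring
    linear_combination ((p i - p j) / (p i + p j) *
      (((1 + b * p i) / (1 - b * p i)) ^ l * ((1 + b * p j) / (1 - b * p j)) ^ l)) * hexp
  have hτFF : ∀ s t, τ l s t = FF N cc a α β K s t := by
    intro s t
    rw [hτ]
    simp only [pfaffian, FF, Matrix.of_apply, ← hK]
    congr 1
    apply Finset.sum_congr rfl
    intro σ _
    congr 1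
    apply Finset.prod_congr rfl
    intro k _
    exact hent s t _ _
  -- reduction: μ i + μ i.rev = 0
  have hμrev : ∀ i : Fin (2*N), μ i + μ i.rev = 0 := by
    intro i
    have h := hred i
    have h1 := hp0 i
    have h2 := hp0 i.rev
    simp only [hμ, hβ, hα]
    field_simp
    linear_combination h
  have hccμ : ∀ i j : Fin (2*N), (μ i + μ j) * cc i j = 0 := by
    intro i j
    by_cases hj : j = i.rev
    · subst hj
      rw [hμrev i, zero_mul]
    · rw [hcc, hC, if_neg hj]
      ring
  have hμ0 : ∑ i : Fin (2*N), μ i = 0 := by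
    have h1 : ∑ i : Fin (2*N), μ (Fin.rev i) = ∑ i : Fin (2*N), μ i :=
      Equiv.sum_comp Fin.revPerm μ
    have h2 : ∑ i : Fin (2*N), μ (Fin.rev i) = - ∑ i : Fin (2*N), μ i := by
      rw [← Finset.sum_neg_distrib]
      apply Finset.sum_congr rfl
      intro i _
      have := hμrev i
      linarith
    linarith
  -- derivatives
  have hfunr : (fun t => τ l s t) =ᶠ[nhds r] (fun t => FF N cc a α β K s t) :=
    Filter.Eventually.of_forall fun t => hτFF s t
  have hDr : HasDerivAt (fun t => τ l s t)
      (K * ∑ σ : Equiv.Perm (Fin (2*N)), ((Equiv.Perm.sign σ : ℤ) : ℝ) *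
        ∑ k : Fin N, (∏ j ∈ Finset.univ.erase k,
            Ent N cc a α β s r (σ (idx0 N j)) (σ (idx1 N j))) *
          ((β (σ (idx0 N k)) + β (σ (idx1 N k))) *
            (Ent N cc a α β s r (σ (idx0 N k)) (σ (idx1 N k))
              - cc (σ (idx0 N k)) (σ (idx1 N k))))) r :=
    (hfunr.hasDerivAt_iff).mpr (FF_hasDerivAt N cc a α β K s r)
  have hfuns : (fun x => τ l x r) =ᶠ[nhds s] (fun x => FF N cc a β α K r x) :=
    Filter.Eventually.of_forall fun x => by
      show τ l x r = FF N cc a β α K r x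
      rw [hτFF x r, FF_symm]
  have hDs : HasDerivAt (fun x => τ l x r)
      (K * ∑ σ : Equiv.Perm (Fin (2*N)), ((Equiv.Perm.sign σ : ℤ) : ℝ) *
        ∑ k : Fin N, (∏ j ∈ Finset.univ.erase k,
            Ent N cc a β α r s (σ (idx0 N j)) (σ (idx1 N j))) *
          ((α (σ (idx0 N k)) + α (σ (idx1 N k))) *
            (Ent N cc a β α r s (σ (idx0 N k)) (σ (idx1 N k))
              - cc (σ (idx0 N k)) (σ (idx1 N k))))) s :=
    (hfuns.hasDerivAt_iff).mpr (FF_hasDerivAt N cc a β α K r s)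
  have hEs : ∀ i j : Fin (2*N), Ent N cc a β α r s i j = Ent N cc a α β s r i j := by
    intro i j
    simp only [Ent]
    rw [add_comm (r * (β i + β j))]
  have hdr : dR (τ l) s r = K * ∑ σ : Equiv.Perm (Fin (2*N)), ((Equiv.Perm.sign σ : ℤ) : ℝ) *
        ∑ k : Fin N, (∏ j ∈ Finset.univ.erase k,
            Ent N cc a α β s r (σ (idx0 N j)) (σ (idx1 N j))) *
          ((β (σ (idx0 N k)) + β (σ (idx1 N k))) *
            (Ent N cc a α β s r (σ (idx0 N k)) (σ (idx1 N k))
              - cc (σ (idx0 N k)) (σ (idx1 N k)))) := hDr.deriv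
  have hds : dS (τ l) s r = K * ∑ σ : Equiv.Perm (Fin (2*N)), ((Equiv.Perm.sign σ : ℤ) : ℝ) *
        ∑ k : Fin N, (∏ j ∈ Finset.univ.erase k,
            Ent N cc a α β s r (σ (idx0 N j)) (σ (idx1 N j))) *
          ((α (σ (idx0 N k)) + α (σ (idx1 N k))) *
            (Ent N cc a α β s r (σ (idx0 N k)) (σ (idx1 N k))
              - cc (σ (idx0 N k)) (σ (idx1 N k)))) := by
    have := hDs.deriv
    simp only [hEs] at this
    exact this
  rw [hdr, hds]
  -- final algebra
  have hσ : ∀ σ : Equiv.Perm (Fin (2*N)),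
      (∑ k : Fin N, (∏ j ∈ Finset.univ.erase k,
            Ent N cc a α β s r (σ (idx0 N j)) (σ (idx1 N j))) *
          ((β (σ (idx0 N k)) + β (σ (idx1 N k))) *
            (Ent N cc a α β s r (σ (idx0 N k)) (σ (idx1 N k))
              - cc (σ (idx0 N k)) (σ (idx1 N k)))))
      = b^2 * ∑ k : Fin N, (∏ j ∈ Finset.univ.erase k,
            Ent N cc a α β s r (σ (idx0 N j)) (σ (idx1 N j))) *
          ((α (σ (idx0 N k)) + α (σ (idx1 N k))) *
            (Ent N cc a α β s r (σ (idx0 N k)) (σ (idx1 N k))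
              - cc (σ (idx0 N k)) (σ (idx1 N k)))) := by
    intro σ
    have hterm : ∀ k : Fin N,
        (∏ j ∈ Finset.univ.erase k,
            Ent N cc a α β s r (σ (idx0 N j)) (σ (idx1 N j))) *
          ((β (σ (idx0 N k)) + β (σ (idx1 N k))) *
            (Ent N cc a α β s r (σ (idx0 N k)) (σ (idx1 N k))
              - cc (σ (idx0 N k)) (σ (idx1 N k))))
        - b^2 * ((∏ j ∈ Finset.univ.erase k,
            Ent N cc a α β s r (σ (idx0 N j)) (σ (idx1 N j))) *
          ((α (σ (idx0 N k)) + α (σ (idx1 N k))) *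
            (Ent N cc a α β s r (σ (idx0 N k)) (σ (idx1 N k))
              - cc (σ (idx0 N k)) (σ (idx1 N k)))))
        = (μ (σ (idx0 N k)) + μ (σ (idx1 N k))) *
            ∏ j : Fin N, Ent N cc a α β s r (σ (idx0 N j)) (σ (idx1 N j)) := by
      intro k
      have h1 : (∏ j ∈ Finset.univ.erase k,
            Ent N cc a α β s r (σ (idx0 N j)) (σ (idx1 N j))) *
          Ent N cc a α β s r (σ (idx0 N k)) (σ (idx1 N k))
          = ∏ j : Fin N, Ent N cc a α β s r (σ (idx0 N j)) (σ (idx1 N j)) :=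
        Finset.prod_erase_mul _ _ (Finset.mem_univ k)
      have h0 := hccμ (σ (idx0 N k)) (σ (idx1 N k))
      simp only [hμ] at h0 ⊢
      exact term_cancel b _ _ _ _ _ _ _ _ h1 h0
    have hsum0 : ∑ k : Fin N, (μ (σ (idx0 N k)) + μ (σ (idx1 N k))) = 0 := by
      rw [sum_fin_pair N (fun m => μ (σ m)), Equiv.sum_comp σ μ, hμ0]
    have : (∑ k : Fin N, (∏ j ∈ Finset.univ.erase k,
            Ent N cc a α β s r (σ (idx0 N j)) (σ (idx1 N j))) *
          ((β (σ (idx0 N k)) + β (σ (idx1 N k))) *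
            (Ent N cc a α β s r (σ (idx0 N k)) (σ (idx1 N k))
              - cc (σ (idx0 N k)) (σ (idx1 N k)))))
        - b^2 * ∑ k : Fin N, (∏ j ∈ Finset.univ.erase k,
            Ent N cc a α β s r (σ (idx0 N j)) (σ (idx1 N j))) *
          ((α (σ (idx0 N k)) + α (σ (idx1 N k))) *
            (Ent N cc a α β s r (σ (idx0 N k)) (σ (idx1 N k))
              - cc (σ (idx0 N k)) (σ (idx1 N k)))) = 0 := by
      rw [Finset.mul_sum, ← Finset.sum_sub_distrib]
      rw [Finset.sum_congr rfl fun k _ => hterm k]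
      rw [← Finset.sum_mul, hsum0, zero_mul]
    linarith
  calc K * ∑ σ : Equiv.Perm (Fin (2*N)), ((Equiv.Perm.sign σ : ℤ) : ℝ) *
        ∑ k : Fin N, (∏ j ∈ Finset.univ.erase k,
            Ent N cc a α β s r (σ (idx0 N j)) (σ (idx1 N j))) *
          ((β (σ (idx0 N k)) + β (σ (idx1 N k))) *
            (Ent N cc a α β s r (σ (idx0 N k)) (σ (idx1 N k))
              - cc (σ (idx0 N k)) (σ (idx1 N k))))
      = K * ∑ σ : Equiv.Perm (Fin (2*N)), b^2 * (((Equiv.Perm.sign σ : ℤ) : ℝ) *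
        ∑ k : Fin N, (∏ j ∈ Finset.univ.erase k,
            Ent N cc a α β s r (σ (idx0 N j)) (σ (idx1 N j))) *
          ((α (σ (idx0 N k)) + α (σ (idx1 N k))) *
            (Ent N cc a α β s r (σ (idx0 N k)) (σ (idx1 N k))
              - cc (σ (idx0 N k)) (σ (idx1 N k))))) := by
        congr 1
        apply Finset.sum_congr rfl
        intro σ _
        rw [hσ σ]
        ring
    _ = b^2 * (K * ∑ σ : Equiv.Perm (Fin (2*N)), ((Equiv.Perm.sign σ : ℤ) : ℝ) *
        ∑ k : Fin N, (∏ j ∈ Finset.univ.erase k,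
            Ent N cc a α β s r (σ (idx0 N j)) (σ (idx1 N j))) *
          ((α (σ (idx0 N k)) + α (σ (idx1 N k))) *
            (Ent N cc a α β s r (σ (idx0 N k)) (σ (idx1 N k))
              - cc (σ (idx0 N k)) (σ (idx1 N k))))) := by
        rw [← Finset.mul_sum]
        ring
end

section
/- Let b ≠ 0 be real and let τ_l : ℝ → ℝ (l ∈ ℤ) be smooth positive functions of s satisfying (D_s³ - 3b D_s² + 2b² D_s) τ_{l+1}·τ_l = 0 for all l, s. Then for all l, s, (ln(τ_{l+1}/τ_l))''' = ( b - (ln(τ_{l+1}/τ_l))' ) · [ 3 (ln(τ_{l+1} τ_l))'' - (ln(τ_{l+1}/τ_l))' ( 2b - (ln(τ_{l+1}/τ_l))' ) ]. (Equation (3.22) of the paper.) -/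
open Real

private lemma dlog (h : ℝ → ℝ) (hd : Differentiable ℝ h) (hp : ∀ t, 0 < h t) :
    deriv (fun t => Real.log (h t)) = fun t => deriv h t / h t := by
  funext t
  exact (((hd t).hasDerivAt).log (hp t).ne').deriv

private lemma key (b : ℝ) (f g : ℝ → ℝ)
    (hf : ContDiff ℝ (⊤ : ℕ∞) f) (hg : ContDiff ℝ (⊤ : ℕ∞) g)
    (hfp : ∀ t, 0 < f t) (hgp : ∀ t, 0 < g t)
    (hbil : ∀ s : ℝ,
      (deriv (deriv (deriv f)) s * g s
          - 3 * deriv (deriv f) s * deriv g s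
          + 3 * deriv f s * deriv (deriv g) s
          - f s * deriv (deriv (deriv g)) s)
        - 3 * b * (deriv (deriv f) s * g s
          - 2 * deriv f s * deriv g s
          + f s * deriv (deriv g) s)
        + 2 * b^2 * (deriv f s * g s - f s * deriv g s) = 0) :
    ∀ s : ℝ,
      deriv (deriv (deriv (fun t => Real.log (f t / g t)))) s
        = (b - deriv (fun t => Real.log (f t / g t)) s) *
          (3 * deriv (deriv (fun t => Real.log (f t * g t))) s
            - deriv (fun t => Real.log (f t / g t)) s *
              (2 * b - deriv (fun t => Real.log (f t / g t)) s)) := by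
  intro s
  have hfd : Differentiable ℝ f := hf.differentiable (by simp)
  have hf' : ContDiff ℝ (⊤ : ℕ∞) f := hf.of_le (by simp)
  have hf1 : ContDiff ℝ (⊤ : ℕ∞) (deriv f) := (contDiff_infty_iff_deriv.mp hf').2
  have hf1d : Differentiable ℝ (deriv f) := hf1.differentiable (by simp)
  have hf2 : ContDiff ℝ (⊤ : ℕ∞) (deriv (deriv f)) := (contDiff_infty_iff_deriv.mp hf1).2
  have hf2d : Differentiable ℝ (deriv (deriv f)) := hf2.differentiable (by simp)
  have hgd : Differentiable ℝ g := hg.differentiable (by simp)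
  have hg' : ContDiff ℝ (⊤ : ℕ∞) g := hg.of_le (by simp)
  have hg1 : ContDiff ℝ (⊤ : ℕ∞) (deriv g) := (contDiff_infty_iff_deriv.mp hg').2
  have hg1d : Differentiable ℝ (deriv g) := hg1.differentiable (by simp)
  have hg2 : ContDiff ℝ (⊤ : ℕ∞) (deriv (deriv g)) := (contDiff_infty_iff_deriv.mp hg1).2
  have hg2d : Differentiable ℝ (deriv (deriv g)) := hg2.differentiable (by simp)
  have hfne : ∀ t, f t ≠ 0 := fun t => (hfp t).ne'
  have hgne : ∀ t, g t ≠ 0 := fun t => (hgp t).ne'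
  -- first derivative of log(f/g)
  have e1 : (fun t => Real.log (f t / g t)) = fun t => Real.log (f t) - Real.log (g t) := by
    funext t; exact Real.log_div (hfne t) (hgne t)
  have e1' : (fun t => Real.log (f t * g t)) = fun t => Real.log (f t) + Real.log (g t) := by
    funext t; exact Real.log_mul (hfne t) (hgne t)
  have dlf : deriv (fun t => Real.log (f t)) = fun t => deriv f t / f t := dlog f hfd hfp
  have dlg : deriv (fun t => Real.log (g t)) = fun t => deriv g t / g t := dlog g hgd hgp
  have dLf : ∀ t, DifferentiableAt ℝ (fun t => Real.log (f t)) t :=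
    fun t => ((hfd t).hasDerivAt.log (hfne t)).differentiableAt
  have dLg : ∀ t, DifferentiableAt ℝ (fun t => Real.log (g t)) t :=
    fun t => ((hgd t).hasDerivAt.log (hgne t)).differentiableAt
  have D1 : deriv (fun t => Real.log (f t / g t)) = fun t => deriv f t / f t - deriv g t / g t := by
    rw [e1]; funext t
    rw [deriv_fun_sub (dLf t) (dLg t), dlf, dlg]
  have D1' : deriv (fun t => Real.log (f t * g t)) = fun t => deriv f t / f t + deriv g t / g t := by
    rw [e1']; funext t
    rw [deriv_fun_add (dLf t) (dLg t), dlf, dlg]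
  -- second derivative
  have dq : ∀ (h : ℝ → ℝ), Differentiable ℝ h → Differentiable ℝ (deriv h) → (∀ t, h t ≠ 0) →
      ∀ t, deriv (fun t => deriv h t / h t) t
        = (deriv (deriv h) t * h t - deriv h t * deriv h t) / (h t)^2 := by
    intro h hd h1d hne t
    rw [deriv_fun_div (h1d t) (hd t) (hne t)]
  have dqd : ∀ (h : ℝ → ℝ), Differentiable ℝ h → Differentiable ℝ (deriv h) → (∀ t, h t ≠ 0) →
      ∀ t, DifferentiableAt ℝ (fun t => deriv h t / h t) t :=
    fun h hd h1d hne t => (h1d t).div (hd t) (hne t)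
  have D2 : deriv (deriv (fun t => Real.log (f t / g t)))
      = fun t => (deriv (deriv f) t * f t - deriv f t * deriv f t) / (f t)^2
          - (deriv (deriv g) t * g t - deriv g t * deriv g t) / (g t)^2 := by
    rw [D1]; funext t
    rw [deriv_fun_sub (dqd f hfd hf1d hfne t) (dqd g hgd hg1d hgne t),
      dq f hfd hf1d hfne t, dq g hgd hg1d hgne t]
  have D2' : deriv (deriv (fun t => Real.log (f t * g t))) s
      = (deriv (deriv f) s * f s - deriv f s * deriv f s) / (f s)^2
          + (deriv (deriv g) s * g s - deriv g s * deriv g s) / (g s)^2 := by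
    rw [D1', deriv_fun_add (dqd f hfd hf1d hfne s) (dqd g hgd hg1d hgne s),
      dq f hfd hf1d hfne s, dq g hgd hg1d hgne s]
  -- third derivative
  have dq2 : ∀ (h : ℝ → ℝ), Differentiable ℝ h → Differentiable ℝ (deriv h) →
      Differentiable ℝ (deriv (deriv h)) → (∀ t, h t ≠ 0) →
      deriv (fun t => (deriv (deriv h) t * h t - deriv h t * deriv h t) / (h t)^2) s
        = ((deriv (deriv (deriv h)) s * h s - deriv (deriv h) s * deriv h s) * (h s)^2
            - (deriv (deriv h) s * h s - deriv h s * deriv h s) * (2 * h s * deriv h s))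
            / ((h s)^2)^2 := by
    intro h hd h1d h2d hne
    rw [deriv_fun_div (c := fun t => deriv (deriv h) t * h t - deriv h t * deriv h t)
        (d := fun t => h t ^ 2) (((h2d s).mul (hd s)).sub ((h1d s).mul (h1d s)))
        ((hd s).pow 2) (pow_ne_zero 2 (hne s)),
      deriv_fun_sub (f := fun t => deriv (deriv h) t * h t) (g := fun t => deriv h t * deriv h t)
        ((h2d s).mul (hd s)) ((h1d s).mul (h1d s)),
      deriv_fun_mul (h2d s) (hd s), deriv_fun_mul (h1d s) (h1d s),
      ((hd s).hasDerivAt.fun_pow 2).deriv]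
    ring
  have dq2d : ∀ (h : ℝ → ℝ), Differentiable ℝ h → Differentiable ℝ (deriv h) →
      Differentiable ℝ (deriv (deriv h)) → (∀ t, h t ≠ 0) →
      ∀ t, DifferentiableAt ℝ
        (fun t => (deriv (deriv h) t * h t - deriv h t * deriv h t) / (h t)^2) t :=
    fun h hd h1d h2d hne t =>
      (((h2d t).mul (hd t)).sub ((h1d t).mul (h1d t))).div ((hd t).pow 2)
        (pow_ne_zero 2 (hne t))
  have D3 : deriv (deriv (deriv (fun t => Real.log (f t / g t)))) s
      = ((deriv (deriv (deriv f)) s * f s - deriv (deriv f) s * deriv f s) * (f s)^2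
            - (deriv (deriv f) s * f s - deriv f s * deriv f s) * (2 * f s * deriv f s))
            / ((f s)^2)^2
        - ((deriv (deriv (deriv g)) s * g s - deriv (deriv g) s * deriv g s) * (g s)^2
            - (deriv (deriv g) s * g s - deriv g s * deriv g s) * (2 * g s * deriv g s))
            / ((g s)^2)^2 := by
    rw [D2, deriv_fun_sub (dq2d f hfd hf1d hf2d hfne s) (dq2d g hgd hg1d hg2d hgne s),
      dq2 f hfd hf1d hf2d hfne, dq2 g hgd hg1d hg2d hgne]
  rw [D3, D2', D1]
  have hB := hbil s
  have hfs := hfne s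
  have hgs := hgne s
  field_simp
  linear_combination (f s)^2 * (g s)^2 * hB


/-- Equation (3.22): the bilinear equation `(D_s³ - 3b D_s² + 2b² D_s) τ_{l+1}·τ_l = 0`
implies `(ln(τ_{l+1}/τ_l))''' = (b - (ln(τ_{l+1}/τ_l))')·
[3(ln(τ_{l+1}τ_l))'' - (ln(τ_{l+1}/τ_l))'(2b - (ln(τ_{l+1}/τ_l))')]`. -/
theorem stmt16
    (b : ℝ) (hb : b ≠ 0)
    (τ : ℤ → ℝ → ℝ)
    (hτsmooth : ∀ l, ContDiff ℝ (⊤ : ℕ∞) (τ l))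
    (hτpos : ∀ l s, 0 < τ l s)
    (hbil : ∀ (l : ℤ) (s : ℝ),
      (deriv (deriv (deriv (τ (l+1)))) s * τ l s
          - 3 * deriv (deriv (τ (l+1))) s * deriv (τ l) s
          + 3 * deriv (τ (l+1)) s * deriv (deriv (τ l)) s
          - τ (l+1) s * deriv (deriv (deriv (τ l))) s)
        - 3 * b * (deriv (deriv (τ (l+1))) s * τ l s
          - 2 * deriv (τ (l+1)) s * deriv (τ l) s
          + τ (l+1) s * deriv (deriv (τ l)) s)
        + 2 * b^2 * (deriv (τ (l+1)) s * τ l s - τ (l+1) s * deriv (τ l) s) = 0) :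
    ∀ (l : ℤ) (s : ℝ),
      deriv (deriv (deriv (fun t => Real.log (τ (l+1) t / τ l t)))) s
        = (b - deriv (fun t => Real.log (τ (l+1) t / τ l t)) s) *
          (3 * deriv (deriv (fun t => Real.log (τ (l+1) t * τ l t))) s
            - deriv (fun t => Real.log (τ (l+1) t / τ l t)) s *
              (2 * b - deriv (fun t => Real.log (τ (l+1) t / τ l t)) s)) := by
  intro l s
  exact key b (τ (l+1)) (τ l) (hτsmooth (l+1)) (hτsmooth l) (hτpos (l+1)) (hτpos l)
    (fun t => hbil l t) s
end

section
/- Let b ≠ 0 be real and let τ_l : ℝ → ℝ (l ∈ ℤ) be smooth positive functions of s satisfying (D_s³ - 3b D_s² + 2b² D_s) τ_{l+1}·τ_l = 0 for all l, s. Define u_l(s) = -2 (d²/ds²) ln τ_l(s), x_l(s) = 2 l b - 2 (d/ds) ln τ_l(s), and δ_l(s) = x_{l+1}(s) - x_l(s). Then for all l, s: (d/ds)(u_{l+1} - u_l) = (3/2) δ_l (u_l + u_{l+1}) - (1/4) δ_l (δ_l² - 4b²), and dδ_l/ds = u_{l+1} - u_l. (Theorem 3.1 of the paper: the semi-discrete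 reduced Ostrovsky equation.) -/
private lemma logd1 (f : ℝ → ℝ) (hf : ContDiff ℝ (⊤ : ℕ∞) f) (hpos : ∀ s, 0 < f s) :
    deriv (fun t => Real.log (f t)) = fun t => deriv f t / f t := by
  funext s
  exact (((hf.differentiable (by simp)).differentiableAt.hasDerivAt).log (hpos s).ne').deriv

private lemma dsm (f : ℝ → ℝ) (hf : ContDiff ℝ (⊤:ℕ∞) f) : ContDiff ℝ (⊤:ℕ∞) (deriv f) :=
  (contDiff_infty_iff_deriv.mp hf).2

private lemma logd2 (f : ℝ → ℝ) (hf : ContDiff ℝ (⊤ : ℕ∞) f) (hpos : ∀ s, 0 < f s) :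
    deriv (deriv (fun t => Real.log (f t)))
      = fun s => (deriv (deriv f) s * f s - deriv f s * deriv f s) / (f s)^2 := by
  rw [logd1 f hf hpos]
  funext s
  have h0 : HasDerivAt f (deriv f s) s := (hf.differentiable (by simp) s).hasDerivAt
  have h1 : HasDerivAt (deriv f) (deriv (deriv f) s) s :=
    ((dsm f (hf.of_le (by simp))).differentiable (by simp) s).hasDerivAt
  exact (h1.div h0 (hpos s).ne').deriv

private lemma logd3H (f : ℝ → ℝ) (hf : ContDiff ℝ (⊤ : ℕ∞) f) (hpos : ∀ s, 0 < f s) (s : ℝ) :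
    HasDerivAt (fun t => (deriv (deriv f) t * f t - deriv f t * deriv f t) / (f t)^2)
      (((deriv (deriv (deriv f)) s * f s + deriv (deriv f) s * deriv f s
          - (deriv (deriv f) s * deriv f s + deriv f s * deriv (deriv f) s)) * (f s)^2
        - (deriv (deriv f) s * f s - deriv f s * deriv f s) * ((2:ℕ) * f s ^ 1 * deriv f s))
        / ((f s)^2)^2) s := by
  have h0 : HasDerivAt f (deriv f s) s := (hf.differentiable (by simp) s).hasDerivAt
  have h1 : HasDerivAt (deriv f) (deriv (deriv f) s) s :=
    ((dsm f (hf.of_le (by simp))).differentiable (by simp) s).hasDerivAt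
  have h2 : HasDerivAt (deriv (deriv f)) (deriv (deriv (deriv f)) s) s :=
    ((dsm _ (dsm f (hf.of_le (by simp)))).differentiable (by simp) s).hasDerivAt
  exact ((h2.mul h0).sub (h1.mul h1)).div (h0.pow 2) (pow_ne_zero 2 (hpos s).ne')


/-- Theorem 3.1: the bilinear equation `(D_s³ - 3b D_s² + 2b² D_s) τ_{l+1}·τ_l = 0`
yields the semi-discrete reduced Ostrovsky equation. -/
theorem stmt17
    (b : ℝ) (hb : b ≠ 0)
    (τ : ℤ → ℝ → ℝ)
    (hτsmooth : ∀ l, ContDiff ℝ (⊤ : ℕ∞) (τ l))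
    (hτpos : ∀ l s, 0 < τ l s)
    (hbil : ∀ (l : ℤ) (s : ℝ),
      (deriv (deriv (deriv (τ (l+1)))) s * τ l s
          - 3 * deriv (deriv (τ (l+1))) s * deriv (τ l) s
          + 3 * deriv (τ (l+1)) s * deriv (deriv (τ l)) s
          - τ (l+1) s * deriv (deriv (deriv (τ l))) s)
        - 3 * b * (deriv (deriv (τ (l+1))) s * τ l s
          - 2 * deriv (τ (l+1)) s * deriv (τ l) s
          + τ (l+1) s * deriv (deriv (τ l)) s)
        + 2 * b^2 * (deriv (τ (l+1)) s * τ l s - τ (l+1) s * deriv (τ l) s) = 0)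
    (u x δ : ℤ → ℝ → ℝ)
    (hu : ∀ l s, u l s = -2 * deriv (deriv (fun t => Real.log (τ l t))) s)
    (hx : ∀ l s, x l s = 2*(l:ℝ)*b - 2 * deriv (fun t => Real.log (τ l t)) s)
    (hδ : ∀ l s, δ l s = x (l+1) s - x l s) :
    ∀ (l : ℤ) (s : ℝ),
      deriv (fun t => u (l+1) t - u l t) s
        = (3/2) * δ l s * (u l s + u (l+1) s)
          - (1/4) * δ l s * ((δ l s)^2 - 4 * b^2) ∧
      deriv (δ l) s = u (l+1) s - u l s := by
  intro l s
  have hf := hτsmooth (l+1)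
  have hg := hτsmooth l
  have hfp := hτpos (l+1)
  have hgp := hτpos l
  have B := hbil l s
  set F := τ (l+1) with hFdef
  set G := τ l with hGdef
  have h0f : HasDerivAt F (deriv F s) s := (hf.differentiable (by simp) s).hasDerivAt
  have h0g : HasDerivAt G (deriv G s) s := (hg.differentiable (by simp) s).hasDerivAt
  have h1f : HasDerivAt (deriv F) (deriv (deriv F) s) s :=
    ((dsm F (hf.of_le (by simp))).differentiable (by simp) s).hasDerivAt
  have h1g : HasDerivAt (deriv G) (deriv (deriv G) s) s :=
    ((dsm G (hg.of_le (by simp))).differentiable (by simp) s).hasDerivAt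
  -- pointwise values
  have hδs : δ l s = 2*b - 2*(deriv F s / F s - deriv G s / G s) := by
    rw [hδ, hx, hx, logd1 F hf hfp, logd1 G hg hgp]
    push_cast; ring
  have hus : u l s = -2 * ((deriv (deriv G) s * G s - deriv G s * deriv G s) / (G s)^2) := by
    rw [hu, logd2 G hg hgp]
  have hu1s : u (l+1) s
      = -2 * ((deriv (deriv F) s * F s - deriv F s * deriv F s) / (F s)^2) := by
    rw [hu, logd2 F hf hfp]
  constructor
  · -- first equation
    have hUfun : (fun t => u (l+1) t - u l t)
        = fun t => -2 * ((deriv (deriv F) t * F t - deriv F t * deriv F t) / (F t)^2)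
            - (-2) * ((deriv (deriv G) t * G t - deriv G t * deriv G t) / (G t)^2) := by
      funext t
      rw [hu, hu, logd2 F hf hfp, logd2 G hg hgp]
    rw [hUfun]
    have HF := logd3H F hf hfp s
    have HG := logd3H G hg hgp s
    rw [((HF.const_mul (-2)).fun_sub (HG.const_mul (-2))).deriv]
    rw [hδs, hus, hu1s]
    have hFne : F s ≠ 0 := (hfp s).ne'
    have hGne : G s ≠ 0 := (hgp s).ne'
    field_simp
    linear_combination (-4 * (F s)^2 * (G s)^2) * B
  · -- second equation
    have hδfun : δ l = fun t => 2*b - 2*(deriv F t / F t - deriv G t / G t) := by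
      funext t
      rw [hδ, hx, hx, logd1 F hf hfp, logd1 G hg hgp]
      push_cast; ring
    rw [hδfun]
    have HD : HasDerivAt (fun t => 2*b - 2*(deriv F t / F t - deriv G t / G t))
        (-(2 * ((deriv (deriv F) s * F s - deriv F s * (deriv F) s) / (F s)^2
          - (deriv (deriv G) s * G s - deriv G s * (deriv G) s) / (G s)^2))) s := by
      exact HasDerivAt.const_sub _
        (((h1f.div h0f (hfp s).ne').sub (h1g.div h0g (hgp s).ne')).const_mul 2)
    rw [HD.deriv, hus, hu1s]
    ring
end

section
/- One-loop-soliton verification: let b, p_1, p_2 be nonzero reals with p_1 + p_2 ≠ 0, 1 ± b p_1 ≠ 0, 1 ± b p_2 ≠ 0, satisfying the constraint 1/p_1³ + 1/p_2³ = b²(1/p_1 + 1/p_2), and let c_1, ξ_{1,0}, ξ_{2,0} be real constants. Define τ_l(s) = c_1 + ((p_1 - p_2)/(p_1 + p_2)) E_1(l,s) E_2(l,s), where E_i(l,s) = ((1 + b p_i)/(1 - b p_i))^l exp(s/p_i + ξ_{i,0}). Then (D_s³ - 3b D_s² + 2b² D_s) τ_{l+1}·τ_l = 0 for every integer l and real s.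 -/
lemma dconst_add' (c u μ : ℝ) :
    deriv (fun s => c + u * Real.exp (μ * s)) = fun s => u * μ * Real.exp (μ * s) := by
  funext s
  have h1 : HasDerivAt (fun s : ℝ => μ * s) μ s := by
    simpa using (hasDerivAt_id s).const_mul μ
  have h2 := (Real.hasDerivAt_exp (μ * s)).comp s h1
  have h3 := (h2.const_mul u).const_add c
  have h4 : HasDerivAt (fun s : ℝ => c + u * Real.exp (μ * s))
      (u * μ * Real.exp (μ * s)) s := by
    exact h3.congr_deriv (by ring)
  exact h4.deriv

lemma dmul' (u μ : ℝ) :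
    deriv (fun s => u * Real.exp (μ * s)) = fun s => u * μ * Real.exp (μ * s) := by
  have h := dconst_add' 0 u μ
  simpa using h

/-- One-loop-soliton verification: the one-soliton tau function satisfies
`(D_s³ - 3b D_s² + 2b² D_s) τ_{l+1}·τ_l = 0`. -/
theorem stmt19
    (b p1 p2 : ℝ) (hb : b ≠ 0) (hp1 : p1 ≠ 0) (hp2 : p2 ≠ 0)
    (hsum : p1 + p2 ≠ 0)
    (h1m : 1 - b * p1 ≠ 0) (h1p : 1 + b * p1 ≠ 0)
    (h2m : 1 - b * p2 ≠ 0) (h2p : 1 + b * p2 ≠ 0)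
    (hcon : 1 / p1^3 + 1 / p2^3 = b^2 * (1 / p1 + 1 / p2))
    (c1 ξ1 ξ2 : ℝ)
    (E : ℤ → ℤ → ℝ → ℝ)
    (hE1 : ∀ (l : ℤ) (s : ℝ), E 1 l s =
      ((1 + b * p1) / (1 - b * p1)) ^ l * Real.exp (s / p1 + ξ1))
    (hE2 : ∀ (l : ℤ) (s : ℝ), E 2 l s =
      ((1 + b * p2) / (1 - b * p2)) ^ l * Real.exp (s / p2 + ξ2))
    (τ : ℤ → ℝ → ℝ)
    (hτ : ∀ (l : ℤ) (s : ℝ),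
      τ l s = c1 + ((p1 - p2) / (p1 + p2)) * E 1 l s * E 2 l s) :
    ∀ (l : ℤ) (s : ℝ),
      (deriv (deriv (deriv (τ (l+1)))) s * τ l s
          - 3 * deriv (deriv (τ (l+1))) s * deriv (τ l) s
          + 3 * deriv (τ (l+1)) s * deriv (deriv (τ l)) s
          - τ (l+1) s * deriv (deriv (deriv (τ l))) s)
        - 3 * b * (deriv (deriv (τ (l+1))) s * τ l s
          - 2 * deriv (τ (l+1)) s * deriv (τ l) s
          + τ (l+1) s * deriv (deriv (τ l)) s)
        + 2 * b^2 * (deriv (τ (l+1)) s * τ l s - τ (l+1) s * deriv (τ l) s) = 0 := by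
  intro l s
  -- algebraic consequences of the constraint (before introducing abbreviations)
  have hpp : p1 * p2 ≠ 0 := mul_ne_zero hp1 hp2
  have hsum2 : p2 + p1 ≠ 0 := by rwa [add_comm]
  have hcon' : (p2 ^ 3 + p1 ^ 3) * (p1 * p2) = b ^ 2 * (p2 + p1) * (p1 ^ 3 * p2 ^ 3) := by
    field_simp at hcon
    linear_combination (p1 * p2) * hcon
  have hq : p1^2 - p1*p2 + p2^2 = b^2 * p1^2 * p2^2 := by
    have h5 : ((p2 + p1) * (p1 * p2)) * (p1^2 - p1*p2 + p2^2)
        = ((p2 + p1) * (p1 * p2)) * (b^2 * p1^2 * p2^2) := by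
      linear_combination hcon'
    exact mul_left_cancel₀ (mul_ne_zero hsum2 hpp) h5
  have hppsq : p1^2 * p2^2 ≠ 0 := by positivity
  have hb2 : b^2 = (p1^2 - p1*p2 + p2^2) / (p1^2 * p2^2) := by
    rw [eq_div_iff hppsq]
    linear_combination -hq
  -- abbreviations
  set μ : ℝ := 1/p1 + 1/p2 with hμdef
  set A : ℝ := (1 + b*p1)/(1 - b*p1) with hA
  set B : ℝ := (1 + b*p2)/(1 - b*p2) with hB
  set C : ℤ → ℝ := fun m => (p1 - p2)/(p1 + p2) * (A ^ m * B ^ m) * Real.exp (ξ1 + ξ2)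
    with hC
  have hA0 : A ≠ 0 := div_ne_zero h1p h1m
  have hB0 : B ≠ 0 := div_ne_zero h2p h2m
  have hτ' : ∀ m : ℤ, τ m = fun t => c1 + C m * Real.exp (μ * t) := by
    intro m
    funext t
    rw [hτ, hE1, hE2]
    have he : Real.exp (t / p1 + ξ1) * Real.exp (t / p2 + ξ2)
        = Real.exp (μ * t) * Real.exp (ξ1 + ξ2) := by
      rw [← Real.exp_add, ← Real.exp_add]
      congr 1
      rw [hμdef]
      field_simp
      ring
    simp only [hC]
    linear_combination ((p1 - p2)/(p1 + p2) * A ^ m * B ^ m) * he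
  have hd1 : ∀ m : ℤ, deriv (τ m) = fun t => C m * μ * Real.exp (μ * t) := by
    intro m; rw [hτ' m, dconst_add']
  have hd2 : ∀ m : ℤ, deriv (deriv (τ m)) = fun t => C m * μ * μ * Real.exp (μ * t) := by
    intro m; rw [hd1 m, dmul']
  have hd3 : ∀ m : ℤ, deriv (deriv (deriv (τ m)))
      = fun t => C m * μ * μ * μ * Real.exp (μ * t) := by
    intro m; rw [hd2 m, dmul']
  -- applied versions
  have hτA : ∀ (m : ℤ) (t : ℝ), τ m t = c1 + C m * Real.exp (μ * t) := by
    intro m t; rw [hτ' m]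
  have hd1A : ∀ (m : ℤ) (t : ℝ), deriv (τ m) t = C m * μ * Real.exp (μ * t) := by
    intro m t; rw [hd1 m]
  have hd2A : ∀ (m : ℤ) (t : ℝ), deriv (deriv (τ m)) t = C m * μ * μ * Real.exp (μ * t) := by
    intro m t; rw [hd2 m]
  have hd3A : ∀ (m : ℤ) (t : ℝ), deriv (deriv (deriv (τ m))) t
      = C m * μ * μ * μ * Real.exp (μ * t) := by
    intro m t; rw [hd3 m]
  have hmu2 : μ^2 = b^2 + 3/(p1*p2) := by
    rw [hμdef, hb2]
    field_simp
    ring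
  have hkey2 : ((b^2 + 3/(p1*p2)) + 2*b^2) * (A*B - 1)
      = 3*b*(1/p1 + 1/p2) * (A*B + 1) := by
    rw [hA, hB]
    field_simp
    ring
  have hrel : C (l+1) = C l * (A*B) := by
    simp only [hC]
    rw [zpow_add_one₀ hA0, zpow_add_one₀ hB0]
    ring
  have hkey : (μ^2 + 2*b^2) * (C (l+1) - C l) = 3*b*μ*(C (l+1) + C l) := by
    rw [hrel, hmu2, hμdef]
    linear_combination (C l) * hkey2
  simp only [hd3A, hd2A, hd1A, hτA]
  linear_combination (c1 * μ * Real.exp (μ * s)) * hkey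
end
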